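/- arXiv:1903.11818 — 10 statements merged into one kernel-verified Lean document; each statement's English description precedes it below -/
import Mathlib

section
/- Let λ₁, λ₂, λ₃ be real numbers with λ₁ + λ₂ + λ₃ = 0. Then 3√6 · |λ₁λ₂λ₃| = (λ₁² + λ₂² + λ₃²)^{3/2} holds if and only if at least two of λ₁, λ₂, λ₃ are equal (i.e., the set {λ₁, λ₂, λ₃} has at most two distinct elements). -/
/-! For a trace-free triple, `(λ₁² + λ₂² + λ₃²)³ = 54 (λ₁λ₂λ₃)² + 2 Δ²` with the Vandermonde
product `Δ = (λ₁ - λ₂)(λ₂ - λ₃)(λ₃ - λ₁)` (this is the discriminant of the characteristic cubic).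
Squaring both sides of the equality, it therefore holds exactly when `Δ = 0`. -/

theorem sum_sq_pow_three_eq_of_add_add_eq_zero {R : Type*} [CommRing R] {a b c : R} (h : a + b + c = 0) :
    (a ^ 2 + b ^ 2 + c ^ 2) ^ 3 = 54 * (a * b * c) ^ 2 + 2 * ((a - b) * (b - c) * (c - a)) ^ 2 := by
  obtain rfl : c = -a - b := by linear_combination h
  ring

theorem three_mul_sqrt_six_mul_abs_eq_rpow_iff (x : ℝ) {s : ℝ} (hs : 0 ≤ s) :
    3 * √6 * |x| = s ^ ((3 : ℝ) / 2) ↔ 54 * x ^ 2 = s ^ 3 := by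
  have hlhs : (3 * √6 * |x|) ^ 2 = 54 * x ^ 2 := by
    rw [mul_pow, mul_pow, Real.sq_sqrt (by norm_num), sq_abs]
    ring
  have hrhs : (s ^ ((3 : ℝ) / 2)) ^ 2 = s ^ 3 := by
    rw [← Real.rpow_mul_natCast hs]
    norm_num
  rw [← sq_eq_sq₀ (by positivity) (by positivity), hlhs, hrhs]

theorem vandermonde_eq_zero_iff {R : Type*} [CommRing R] [NoZeroDivisors R] {a b c : R} :
    (a - b) * (b - c) * (c - a) = 0 ↔ a = b ∨ a = c ∨ b = c := by
  simp only [mul_eq_zero, sub_eq_zero]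
  tauto

/-- Equality case of the algebraic inequality `3√6 |λ₁λ₂λ₃| ≤ (λ₁² + λ₂² + λ₃²)^(3/2)`
for trace-free triples: equality holds iff at least two of the `λᵢ` coincide. -/
theorem tracefree_det_equality_iff (l1 l2 l3 : ℝ) (hsum : l1 + l2 + l3 = 0) :
    3 * Real.sqrt 6 * |l1 * l2 * l3| = (l1 ^ 2 + l2 ^ 2 + l3 ^ 2) ^ ((3 : ℝ) / 2) ↔
      (l1 = l2 ∨ l1 = l3 ∨ l2 = l3) := by
  rw [three_mul_sqrt_six_mul_abs_eq_rpow_iff _ (by positivity),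
    sum_sq_pow_three_eq_of_add_add_eq_zero hsum, ← vandermonde_eq_zero_iff,
    left_eq_add, mul_eq_zero_iff_left two_ne_zero, sq_eq_zero_iff]
end

section
/- Let h : ℝ → ℝ be twice continuously differentiable and define f(x, y) = x^{1/6} h(y x^{−3/2}) on the open set Ω⁰ = {(x, y) ∈ ℝ² : x > 0}. Then f satisfies the partial differential equation I₄[f] = 0 identically on Ω⁰, where I₄[f] = 6(x³ − 54y²)(f_{xx} f_{yy} − f_{xy}²) f_x + 4(30x f_x² − 72y f_x f_y − x² f_y²) f_{xx} + 4(90y f_x² − 4x² f_x f_y − 3xy f_y²) f_{xy} + (5x² f_x² − 12xy f_x f_y − 9y² f_y²) f_{yy} + 100 f_x³ − 14x f_x f_y² − 8y f_y³. -/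
private lemma rpow_div6_neg (t : ℝ) (ht : 0 < t) (k : ℕ) (r : ℝ) (hr : r = -(k:ℝ)/6) :
    t ^ r = ((t ^ ((1:ℝ)/6)) ^ k)⁻¹ := by
  rw [hr, show -(k:ℝ)/6 = ((1:ℝ)/6) * (-(k:ℝ)) by ring, Real.rpow_mul ht.le,
    Real.rpow_neg (Real.rpow_nonneg ht.le _), Real.rpow_natCast]

private lemma self_eq_pow6 (t : ℝ) (ht : 0 < t) : t = (t ^ ((1:ℝ)/6)) ^ (6:ℕ) := by
  rw [← Real.rpow_natCast (t ^ ((1:ℝ)/6)) 6, ← Real.rpow_mul ht.le]; norm_num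

set_option maxHeartbeats 2000000 in
/-- Every homogeneous variation `f(x,y) = x^(1/6) h(y x^(-3/2))` of `x^(1/6)` solves
the PDE `I₄[f] = 0` on `{x > 0}`. -/
theorem I4_vanishes_on_homogeneous_variations (h : ℝ → ℝ) (hh : ContDiff ℝ 2 h) :
    let f : ℝ → ℝ → ℝ := fun x y => x ^ ((1 : ℝ) / 6) * h (y * x ^ (-(3 : ℝ) / 2))
    let fx : ℝ → ℝ → ℝ := fun x y => deriv (fun t => f t y) x
    let fy : ℝ → ℝ → ℝ := fun x y => deriv (fun t => f x t) y
    let fxx : ℝ → ℝ → ℝ := fun x y => deriv (fun t => fx t y) x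
    let fxy : ℝ → ℝ → ℝ := fun x y => deriv (fun t => fx x t) y
    let fyy : ℝ → ℝ → ℝ := fun x y => deriv (fun t => fy x t) y
    ∀ x y : ℝ, 0 < x →
      6 * (x ^ 3 - 54 * y ^ 2) * (fxx x y * fyy x y - (fxy x y) ^ 2) * fx x y
        + 4 * (30 * x * (fx x y) ^ 2 - 72 * y * fx x y * fy x y - x ^ 2 * (fy x y) ^ 2) * fxx x y
        + 4 * (90 * y * (fx x y) ^ 2 - 4 * x ^ 2 * fx x y * fy x y
            - 3 * x * y * (fy x y) ^ 2) * fxy x y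
        + (5 * x ^ 2 * (fx x y) ^ 2 - 12 * x * y * fx x y * fy x y
            - 9 * y ^ 2 * (fy x y) ^ 2) * fyy x y
        + 100 * (fx x y) ^ 3 - 14 * x * fx x y * (fy x y) ^ 2 - 8 * y * (fy x y) ^ 3 = 0 := by
  intro f fx fy fxx fxy fyy x y hx
  have hdh : ∀ s : ℝ, HasDerivAt h (deriv h s) s := fun s =>
    ((hh.differentiable (by norm_num)) s).hasDerivAt
  have hB1 : ContDiff ℝ 1 (deriv h) := by
    have := ContDiff.iterate_deriv' 1 1 (f := h) (by exact_mod_cast hh)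
    simpa using this
  have hdB : ∀ s : ℝ, HasDerivAt (deriv h) (deriv (deriv h) s) s := fun s =>
    ((hB1.differentiable one_ne_zero) s).hasDerivAt
  -- first derivative in x, as a function of the basepoint
  have hfx : ∀ (y' t : ℝ), 0 < t →
      HasDerivAt (fun s : ℝ => f s y')
        (1/6 * t ^ (-(5:ℝ)/6) * h (y' * t ^ (-(3:ℝ)/2))
          - 3/2 * y' * t ^ (-(7:ℝ)/3) * deriv h (y' * t ^ (-(3:ℝ)/2))) t := by
    intro y' t ht
    have c := (Real.hasDerivAt_rpow_const (x := t) (p := (1:ℝ)/6) (Or.inl ht.ne')).mul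
        ((hdh (y' * t ^ (-(3:ℝ)/2))).comp t
          ((Real.hasDerivAt_rpow_const (x := t) (p := -(3:ℝ)/2) (Or.inl ht.ne')).const_mul y'))
    refine c.congr_deriv ?_
    symm
    simp only [Function.comp_apply]
    have hQ : (0:ℝ) < t ^ ((1:ℝ)/6) := Real.rpow_pos_of_pos ht ((1:ℝ)/6)
    rw [show (1:ℝ)/6 - 1 = -(5:ℝ)/6 by norm_num, show -(3:ℝ)/2 - 1 = -(5:ℝ)/2 by norm_num,
      rpow_div6_neg t ht 5 (-(5:ℝ)/6) (by norm_num),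
      rpow_div6_neg t ht 14 (-(7:ℝ)/3) (by norm_num),
      rpow_div6_neg t ht 15 (-(5:ℝ)/2) (by norm_num)]
    field_simp
    ring
  -- first derivative in y, as a function of the basepoint
  have hfyT : ∀ t : ℝ, HasDerivAt (fun s : ℝ => f x s)
      (x ^ (-(4:ℝ)/3) * deriv h (t * x ^ (-(3:ℝ)/2))) t := by
    intro t
    have c := ((hdh (t * x ^ (-(3:ℝ)/2))).comp t
        (hasDerivAt_mul_const (x ^ (-(3:ℝ)/2)))).const_mul (x ^ ((1:ℝ)/6))
    refine c.congr_deriv ?_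
    symm
    have hQ : (0:ℝ) < x ^ ((1:ℝ)/6) := Real.rpow_pos_of_pos hx ((1:ℝ)/6)
    rw [rpow_div6_neg x hx 8 (-(4:ℝ)/3) (by norm_num),
      rpow_div6_neg x hx 9 (-(3:ℝ)/2) (by norm_num)]
    field_simp
  have Hfx : fx x y = 1/6 * x ^ (-(5:ℝ)/6) * h (y * x ^ (-(3:ℝ)/2))
      - 3/2 * y * x ^ (-(7:ℝ)/3) * deriv h (y * x ^ (-(3:ℝ)/2)) := (hfx y x hx).deriv
  have Hfy : fy x y = x ^ (-(4:ℝ)/3) * deriv h (y * x ^ (-(3:ℝ)/2)) := (hfyT y).deriv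
  -- second derivative fyy
  have Hfyy : fyy x y = x ^ (-(17:ℝ)/6) * deriv (deriv h) (y * x ^ (-(3:ℝ)/2)) := by
    show deriv (fun t => fy x t) y = _
    have he : (fun t => fy x t)
        = fun t => x ^ (-(4:ℝ)/3) * deriv h (t * x ^ (-(3:ℝ)/2)) :=
      funext fun t => (hfyT t).deriv
    rw [he]
    refine HasDerivAt.deriv ?_
    have c := ((hdB (y * x ^ (-(3:ℝ)/2))).comp y
        (hasDerivAt_mul_const (x ^ (-(3:ℝ)/2)))).const_mul (x ^ (-(4:ℝ)/3))
    refine c.congr_deriv ?_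
    symm
    have hQ : (0:ℝ) < x ^ ((1:ℝ)/6) := Real.rpow_pos_of_pos hx ((1:ℝ)/6)
    rw [rpow_div6_neg x hx 8 (-(4:ℝ)/3) (by norm_num),
      rpow_div6_neg x hx 9 (-(3:ℝ)/2) (by norm_num),
      rpow_div6_neg x hx 17 (-(17:ℝ)/6) (by norm_num)]
    field_simp
  -- second derivative fxy
  have Hfxy : fxy x y = -4/3 * x ^ (-(7:ℝ)/3) * deriv h (y * x ^ (-(3:ℝ)/2))
      - 3/2 * y * x ^ (-(23:ℝ)/6) * deriv (deriv h) (y * x ^ (-(3:ℝ)/2)) := by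
    show deriv (fun t => fx x t) y = _
    have he : (fun t => fx x t)
        = fun t => 1/6 * x ^ (-(5:ℝ)/6) * h (t * x ^ (-(3:ℝ)/2))
          - 3/2 * t * x ^ (-(7:ℝ)/3) * deriv h (t * x ^ (-(3:ℝ)/2)) :=
      funext fun t => (hfx t x hx).deriv
    rw [he]
    refine HasDerivAt.deriv ?_
    have c1 := ((hdh (y * x ^ (-(3:ℝ)/2))).comp y
        (hasDerivAt_mul_const (x ^ (-(3:ℝ)/2)))).const_mul (1/6 * x ^ (-(5:ℝ)/6))
    have c2 := (((hasDerivAt_id y).const_mul (3/2:ℝ)).mul_const (x ^ (-(7:ℝ)/3))).mul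
        ((hdB (y * x ^ (-(3:ℝ)/2))).comp y (hasDerivAt_mul_const (x ^ (-(3:ℝ)/2))))
    have c := c1.sub c2
    refine c.congr_deriv ?_
    symm
    simp only [Function.comp_apply, id_eq]
    have hQ : (0:ℝ) < x ^ ((1:ℝ)/6) := Real.rpow_pos_of_pos hx ((1:ℝ)/6)
    rw [rpow_div6_neg x hx 5 (-(5:ℝ)/6) (by norm_num),
      rpow_div6_neg x hx 9 (-(3:ℝ)/2) (by norm_num),
      rpow_div6_neg x hx 14 (-(7:ℝ)/3) (by norm_num),
      rpow_div6_neg x hx 23 (-(23:ℝ)/6) (by norm_num)]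
    field_simp
    first | ring1 | (left; ring1)
  -- second derivative fxx
  have Hfxx : fxx x y = -5/36 * x ^ (-(11:ℝ)/6) * h (y * x ^ (-(3:ℝ)/2))
      + 13/4 * y * x ^ (-(10:ℝ)/3) * deriv h (y * x ^ (-(3:ℝ)/2))
      + 9/4 * y^2 * x ^ (-(29:ℝ)/6) * deriv (deriv h) (y * x ^ (-(3:ℝ)/2)) := by
    show deriv (fun t => fx t y) x = _
    have hEv : (fun t => fx t y) =ᶠ[nhds x]
        (fun t => 1/6 * t ^ (-(5:ℝ)/6) * h (y * t ^ (-(3:ℝ)/2))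
          - 3/2 * y * t ^ (-(7:ℝ)/3) * deriv h (y * t ^ (-(3:ℝ)/2))) :=
      (eventually_gt_nhds hx).mono fun t ht => (hfx y t ht).deriv
    rw [hEv.deriv_eq]
    refine HasDerivAt.deriv ?_
    have hu := (Real.hasDerivAt_rpow_const (x := x) (p := -(3:ℝ)/2) (Or.inl hx.ne')).const_mul y
    have c1 := (((Real.hasDerivAt_rpow_const (x := x) (p := -(5:ℝ)/6)
        (Or.inl hx.ne')).const_mul (1/6:ℝ)).mul ((hdh (y * x ^ (-(3:ℝ)/2))).comp x hu))
    have c2 := (((Real.hasDerivAt_rpow_const (x := x) (p := -(7:ℝ)/3)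
        (Or.inl hx.ne')).const_mul (3/2 * y)).mul ((hdB (y * x ^ (-(3:ℝ)/2))).comp x hu))
    have c := c1.sub c2
    refine c.congr_deriv ?_
    symm
    simp only [Function.comp_apply]
    have hQ : (0:ℝ) < x ^ ((1:ℝ)/6) := Real.rpow_pos_of_pos hx ((1:ℝ)/6)
    rw [show -(5:ℝ)/6 - 1 = -(11:ℝ)/6 by norm_num, show -(3:ℝ)/2 - 1 = -(5:ℝ)/2 by norm_num,
      show -(7:ℝ)/3 - 1 = -(10:ℝ)/3 by norm_num,
      rpow_div6_neg x hx 5 (-(5:ℝ)/6) (by norm_num),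
      rpow_div6_neg x hx 9 (-(3:ℝ)/2) (by norm_num),
      rpow_div6_neg x hx 11 (-(11:ℝ)/6) (by norm_num),
      rpow_div6_neg x hx 14 (-(7:ℝ)/3) (by norm_num),
      rpow_div6_neg x hx 15 (-(5:ℝ)/2) (by norm_num),
      rpow_div6_neg x hx 20 (-(10:ℝ)/3) (by norm_num),
      rpow_div6_neg x hx 29 (-(29:ℝ)/6) (by norm_num)]
    field_simp
    first | ring1 | (left; ring1)
  -- assemble
  rw [Hfx, Hfy, Hfxx, Hfxy, Hfyy]
  have hQ : (0:ℝ) < x ^ ((1:ℝ)/6) := Real.rpow_pos_of_pos hx ((1:ℝ)/6)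
  rw [rpow_div6_neg x hx 5 (-(5:ℝ)/6) (by norm_num),
    rpow_div6_neg x hx 9 (-(3:ℝ)/2) (by norm_num),
    rpow_div6_neg x hx 8 (-(4:ℝ)/3) (by norm_num),
    rpow_div6_neg x hx 11 (-(11:ℝ)/6) (by norm_num),
    rpow_div6_neg x hx 14 (-(7:ℝ)/3) (by norm_num),
    rpow_div6_neg x hx 17 (-(17:ℝ)/6) (by norm_num),
    rpow_div6_neg x hx 20 (-(10:ℝ)/3) (by norm_num),
    rpow_div6_neg x hx 23 (-(23:ℝ)/6) (by norm_num),
    rpow_div6_neg x hx 29 (-(29:ℝ)/6) (by norm_num)]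
  set Q := x ^ ((1:ℝ)/6) with hQdef
  rw [show x = Q ^ (6:ℕ) by rw [hQdef]; exact self_eq_pow6 x hx]
  field_simp
  ring
end

section
/- Let R be a real constant, let h : ℝ → ℝ be continuously differentiable, and define f(x, y) = x^{1/6} h(z) with z = y x^{−3/2} on the open set {(x, y) ∈ ℝ² : x > 0}. Then I₁[f](x, y) = (1/6) x^{−5/6} [ (Rx − 36y) h(z) − 6 x^{3/2} (1 − 54z²) h′(z) ], where I₁[f] = (Rx − 36y) f_x + ((3/2)Ry − x²) f_y. -/
/-- For `f(x,y) = x^(1/6) h(z)`, `z = y x^(-3/2)`, on `{x > 0}`: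
`I₁[f] = (1/6) x^(-5/6) [ (Rx - 36y) h(z) - 6 x^(3/2) (1 - 54z²) h'(z) ]`. -/
theorem I1_of_homogeneous_variation (R : ℝ) (h : ℝ → ℝ) (hh : ContDiff ℝ 1 h) :
    let f : ℝ → ℝ → ℝ := fun x y => x ^ ((1 : ℝ) / 6) * h (y * x ^ (-(3 : ℝ) / 2))
    let fx : ℝ → ℝ → ℝ := fun x y => deriv (fun t => f t y) x
    let fy : ℝ → ℝ → ℝ := fun x y => deriv (fun t => f x t) y
    ∀ x y : ℝ, 0 < x → ∀ z : ℝ, z = y * x ^ (-(3 : ℝ) / 2) →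
      (R * x - 36 * y) * fx x y + (3 / 2 * R * y - x ^ 2) * fy x y =
        1 / 6 * x ^ (-(5 : ℝ) / 6) *
          ((R * x - 36 * y) * h z
            - 6 * x ^ ((3 : ℝ) / 2) * (1 - 54 * z ^ 2) * deriv h z) := by
  intro f fx fy x y hx z hz
  subst hz
  have hx' : x ≠ 0 := hx.ne'
  have hdh : Differentiable ℝ h := hh.differentiable one_ne_zero
  -- fx
  have h1 : HasDerivAt (fun t : ℝ => t ^ ((1:ℝ)/6)) ((1/6) * x ^ ((1:ℝ)/6 - 1)) x :=
    Real.hasDerivAt_rpow_const (Or.inl hx')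
  have hinner : HasDerivAt (fun t : ℝ => y * t ^ (-(3:ℝ)/2))
      (y * ((-(3:ℝ)/2) * x ^ (-(3:ℝ)/2 - 1))) x :=
    (Real.hasDerivAt_rpow_const (Or.inl hx')).const_mul y
  have h2 : HasDerivAt (fun t : ℝ => h (y * t ^ (-(3:ℝ)/2)))
      (deriv h (y * x ^ (-(3:ℝ)/2)) * (y * ((-(3:ℝ)/2) * x ^ (-(3:ℝ)/2 - 1)))) x :=
    ((hdh (y * x ^ (-(3:ℝ)/2))).hasDerivAt).comp x hinner
  have hfx : fx x y = (1/6) * x ^ ((1:ℝ)/6 - 1) * h (y * x ^ (-(3:ℝ)/2))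
      + x ^ ((1:ℝ)/6) * (deriv h (y * x ^ (-(3:ℝ)/2)) * (y * ((-(3:ℝ)/2) * x ^ (-(3:ℝ)/2 - 1)))) :=
    (h1.mul h2).deriv
  -- fy
  have hinner2 : HasDerivAt (fun t : ℝ => t * x ^ (-(3:ℝ)/2)) (x ^ (-(3:ℝ)/2)) y := by
    simpa using (hasDerivAt_id y).mul_const (x ^ (-(3:ℝ)/2))
  have hfy : fy x y = x ^ ((1:ℝ)/6) * (deriv h (y * x ^ (-(3:ℝ)/2)) * x ^ (-(3:ℝ)/2)) :=
    ((((hdh (y * x ^ (-(3:ℝ)/2))).hasDerivAt).comp y hinner2).const_mul (x ^ ((1:ℝ)/6))).deriv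
  rw [hfx, hfy]
  -- express rpow powers via s = x^(1/6)
  set s : ℝ := x ^ ((1:ℝ)/6) with hs
  have hspos : 0 < s := Real.rpow_pos_of_pos hx _
  have key : ∀ k : ℤ, x ^ ((k : ℝ)/6) = s ^ k := by
    intro k
    rw [show ((k:ℝ)/6) = (1/6) * (k:ℝ) by ring, Real.rpow_mul hx.le, hs, Real.rpow_intCast]
  have e1 : x ^ ((1:ℝ)/6 - 1) = s ^ (-5 : ℤ) := by
    rw [show ((1:ℝ)/6 - 1) = ((-5 : ℤ) : ℝ)/6 by norm_num]; exact key _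
  have e2 : x ^ (-(3:ℝ)/2) = s ^ (-9 : ℤ) := by
    rw [show (-(3:ℝ)/2) = ((-9 : ℤ) : ℝ)/6 by norm_num]; exact key _
  have e3 : x ^ (-(3:ℝ)/2 - 1) = s ^ (-15 : ℤ) := by
    rw [show (-(3:ℝ)/2 - 1) = ((-15 : ℤ) : ℝ)/6 by norm_num]; exact key _
  have e4 : x ^ (-(5:ℝ)/6) = s ^ (-5 : ℤ) := by
    rw [show (-(5:ℝ)/6) = ((-5 : ℤ) : ℝ)/6 by norm_num]; exact key _
  have e5 : x ^ ((3:ℝ)/2) = s ^ (9 : ℤ) := by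
    rw [show ((3:ℝ)/2) = ((9 : ℤ) : ℝ)/6 by norm_num]; exact key _
  have e6 : x = s ^ (6 : ℤ) := by
    conv_lhs => rw [show x = x ^ (((6:ℤ):ℝ)/6) by norm_num]
    exact key _
  rw [e1, e2, e3, e4, e5]
  rw [show x ^ 2 = (s ^ (6:ℤ)) ^ 2 from by rw [← e6]]
  rw [show R * x = R * s ^ (6:ℤ) from by rw [← e6]]
  set A := h (y * s ^ (-9 : ℤ)) with hA
  set B := deriv h (y * s ^ (-9 : ℤ)) with hB
  have hs0 : s ≠ 0 := hspos.ne'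
  clear hfx hfy h1 h2 hinner hinner2 key e1 e2 e3 e4 e5 e6 hA hB hs hspos hx hx' hdh hh
  clear_value A B s
  clear fy fx f
  field_simp
  norm_num [zpow_ofNat]
  ring
end

section
/- Let h : ℝ → ℝ be twice continuously differentiable and define f(x, y) = x^{1/6} h(z) with z = y x^{−3/2} on the open set {(x, y) ∈ ℝ² : x > 0}. Then I₂[f](x, y) = (1/3) x^{−5/6} [ 3(1 − 54z²) h″(z) − 270 z h′(z) + 14 h(z) ], where I₂[f] = 24x f_{xx} + 72y f_{xy} + x² f_{yy} + 48 f_x. -/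
noncomputable def auxFx (h : ℝ → ℝ) (Y t : ℝ) : ℝ :=
  1/6 * t ^ (-(5:ℝ)/6) * h (Y * t ^ (-(3:ℝ)/2)) -
    3/2 * Y * t ^ ((1:ℝ)/6) * t ^ (-(5:ℝ)/2) * deriv h (Y * t ^ (-(3:ℝ)/2))

lemma auxcongr {f : ℝ → ℝ} {a b x : ℝ} (h1 : HasDerivAt f a x) (h2 : a = b) :
    HasDerivAt f b x := h2 ▸ h1

/-- For `f(x,y) = x^(1/6) h(z)`, `z = y x^(-3/2)`, on `{x > 0}`:
`I₂[f] = (1/3) x^(-5/6) [ 3(1 - 54z²) h''(z) - 270 z h'(z) + 14 h(z) ]`. -/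
theorem I2_of_homogeneous_variation (h : ℝ → ℝ) (hh : ContDiff ℝ 2 h) :
    let f : ℝ → ℝ → ℝ := fun x y => x ^ ((1 : ℝ) / 6) * h (y * x ^ (-(3 : ℝ) / 2))
    let fx : ℝ → ℝ → ℝ := fun x y => deriv (fun t => f t y) x
    let fy : ℝ → ℝ → ℝ := fun x y => deriv (fun t => f x t) y
    let fxx : ℝ → ℝ → ℝ := fun x y => deriv (fun t => fx t y) x
    let fxy : ℝ → ℝ → ℝ := fun x y => deriv (fun t => fx x t) y
    let fyy : ℝ → ℝ → ℝ := fun x y => deriv (fun t => fy x t) y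
    ∀ x y : ℝ, 0 < x → ∀ z : ℝ, z = y * x ^ (-(3 : ℝ) / 2) →
      24 * x * fxx x y + 72 * y * fxy x y + x ^ 2 * fyy x y + 48 * fx x y =
        1 / 3 * x ^ (-(5 : ℝ) / 6) *
          (3 * (1 - 54 * z ^ 2) * deriv (deriv h) z - 270 * z * deriv h z + 14 * h z) := by
  intro f fx fy fxx fxy fyy x y hx z hz
  have hx' : x ≠ 0 := hx.ne'
  have hd1 : ∀ t : ℝ, HasDerivAt h (deriv h t) t := fun t =>
    ((hh.differentiable (by norm_num)) t).hasDerivAt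
  have hdh : Differentiable ℝ (deriv h) := by
    have : ContDiff ℝ ((1:ℕ) + 1) h := by exact_mod_cast hh
    exact ((contDiff_succ_iff_deriv.mp this).2.2).differentiable (by norm_num)
  have hd2 : ∀ t : ℝ, HasDerivAt (deriv h) (deriv (deriv h) t) t := fun t =>
    (hdh t).hasDerivAt
  have rp : ∀ (p q : ℝ), p - 1 = q → ∀ t : ℝ, t ≠ 0 →
      HasDerivAt (fun s : ℝ => s ^ p) (p * t ^ q) t := fun p q hpq t ht =>
    hpq ▸ Real.hasDerivAt_rpow_const (Or.inl ht)
  have A : ∀ (Y t : ℝ), t ≠ 0 → HasDerivAt (fun s : ℝ => Y * s ^ (-(3:ℝ)/2))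
      (Y * (-(3:ℝ)/2 * t ^ (-(5:ℝ)/2))) t := fun Y t ht =>
    (rp _ _ (by norm_num) t ht).const_mul Y
  have B : ∀ (Y t : ℝ), t ≠ 0 → HasDerivAt (fun s : ℝ => h (Y * s ^ (-(3:ℝ)/2)))
      (deriv h (Y * t ^ (-(3:ℝ)/2)) * (Y * (-(3:ℝ)/2 * t ^ (-(5:ℝ)/2)))) t := fun Y t ht =>
    (hd1 _).comp t (A Y t ht)
  have Lfx : ∀ (Y t : ℝ), 0 < t →
      HasDerivAt (fun s : ℝ => s ^ ((1:ℝ)/6) * h (Y * s ^ (-(3:ℝ)/2))) (auxFx h Y t) t :=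
    fun Y t ht =>
      auxcongr ((rp ((1:ℝ)/6) (-(5:ℝ)/6) (by norm_num) t ht.ne').mul (B Y t ht.ne'))
        (by unfold auxFx; ring)
  simp only [f, fx, fy, fxx, fxy, fyy]
  -- fxx
  have hev : (fun t => deriv (fun s => s ^ ((1:ℝ)/6) * h (y * s ^ (-(3:ℝ)/2))) t)
      =ᶠ[nhds x] fun t => auxFx h y t := by
    filter_upwards [isOpen_Ioi.mem_nhds (show x ∈ Set.Ioi (0:ℝ) from hx)] with t ht
    exact (Lfx y t ht).deriv
  have Hxx : HasDerivAt (fun t => auxFx h y t)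
      (-(5:ℝ)/36 * x ^ (-(11:ℝ)/6) * h (y * x ^ (-(3:ℝ)/2))
        - 1/2 * y * x ^ (-(5:ℝ)/6) * x ^ (-(5:ℝ)/2) * deriv h (y * x ^ (-(3:ℝ)/2))
        + 15/4 * y * x ^ ((1:ℝ)/6) * x ^ (-(7:ℝ)/2) * deriv h (y * x ^ (-(3:ℝ)/2))
        + 9/4 * y^2 * x ^ ((1:ℝ)/6) * x ^ (-(5:ℝ)/2) * x ^ (-(5:ℝ)/2)
            * deriv (deriv h) (y * x ^ (-(3:ℝ)/2))) x := by
    refine auxcongr (HasDerivAt.sub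
      (((rp (-(5:ℝ)/6) (-(11:ℝ)/6) (by norm_num) x hx').const_mul (1/6:ℝ)).mul (B y x hx'))
      ((((rp ((1:ℝ)/6) (-(5:ℝ)/6) (by norm_num) x hx').const_mul ((3:ℝ)/2 * y)).mul
          (rp (-(5:ℝ)/2) (-(7:ℝ)/2) (by norm_num) x hx')).mul
        ((hd2 _).comp x (A y x hx')))) (by simp only [Pi.mul_apply]; ring)
  -- fxy
  have hfxy1 : (fun t => deriv (fun s => s ^ ((1:ℝ)/6) * h (t * s ^ (-(3:ℝ)/2))) x)
      = fun t => auxFx h t x := funext fun t => (Lfx t x hx).deriv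
  have Hxy : HasDerivAt (fun t => auxFx h t x)
      (1/6 * x ^ (-(5:ℝ)/6) * x ^ (-(3:ℝ)/2) * deriv h (y * x ^ (-(3:ℝ)/2))
        - 3/2 * x ^ ((1:ℝ)/6) * x ^ (-(5:ℝ)/2) * deriv h (y * x ^ (-(3:ℝ)/2))
        - 3/2 * y * x ^ ((1:ℝ)/6) * x ^ (-(5:ℝ)/2) * x ^ (-(3:ℝ)/2)
            * deriv (deriv h) (y * x ^ (-(3:ℝ)/2))) y := by
    refine auxcongr (HasDerivAt.sub
      (((hd1 (y * x ^ (-(3:ℝ)/2))).comp y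
          ((hasDerivAt_id y).mul_const (x ^ (-(3:ℝ)/2)))).const_mul
        (1/6 * x ^ (-(5:ℝ)/6)))
      (((((hasDerivAt_id y).const_mul ((3:ℝ)/2)).mul_const (x ^ ((1:ℝ)/6))).mul_const
          (x ^ (-(5:ℝ)/2))).mul
        (show HasDerivAt (fun t => deriv h (t * x ^ (-(3:ℝ)/2))) _ y from (hd2 (y * x ^ (-(3:ℝ)/2))).comp (h₂ := deriv h) (h := fun t => t * x ^ (-(3:ℝ)/2)) y
          ((hasDerivAt_id' y).mul_const (x ^ (-(3:ℝ)/2)))))) (by simp only [id_eq]; ring)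
  -- fy / fyy
  have Lfy : ∀ t : ℝ, HasDerivAt (fun s => x ^ ((1:ℝ)/6) * h (s * x ^ (-(3:ℝ)/2)))
      (x ^ ((1:ℝ)/6) * (deriv h (t * x ^ (-(3:ℝ)/2)) * (1 * x ^ (-(3:ℝ)/2)))) t := fun t =>
    ((hd1 _).comp t ((hasDerivAt_id t).mul_const _)).const_mul _
  have hfyy1 : (fun t => deriv (fun s => x ^ ((1:ℝ)/6) * h (s * x ^ (-(3:ℝ)/2))) t)
      = fun t => x ^ ((1:ℝ)/6) * (deriv h (t * x ^ (-(3:ℝ)/2)) * (1 * x ^ (-(3:ℝ)/2))) :=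
    funext fun t => (Lfy t).deriv
  have Hyy : HasDerivAt
      (fun t => x ^ ((1:ℝ)/6) * (deriv h (t * x ^ (-(3:ℝ)/2)) * (1 * x ^ (-(3:ℝ)/2))))
      (x ^ ((1:ℝ)/6) * x ^ (-(3:ℝ)/2) * x ^ (-(3:ℝ)/2)
        * deriv (deriv h) (y * x ^ (-(3:ℝ)/2))) y := by
    refine auxcongr ((((hd2 (y * x ^ (-(3:ℝ)/2))).comp y
        ((hasDerivAt_id y).mul_const (x ^ (-(3:ℝ)/2)))).mul_const
        (1 * x ^ (-(3:ℝ)/2))).const_mul (x ^ ((1:ℝ)/6))) (by ring)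
  rw [Filter.EventuallyEq.deriv_eq hev, Hxx.deriv, hfxy1, Hxy.deriv, hfyy1, Hyy.deriv,
    (Lfx y x hx).deriv]
  unfold auxFx
  rw [← hz]
  have hy : y = z * x ^ ((3:ℝ)/2) := by
    rw [hz, mul_assoc, ← Real.rpow_add hx]; norm_num
  rw [hy]
  have key : ∀ (e : ℝ) (n : ℕ), e = n / 6 → x ^ e = (x ^ ((1:ℝ)/6)) ^ n := by
    intro e n he
    rw [he, ← Real.rpow_natCast (x ^ ((1:ℝ)/6)) n, ← Real.rpow_mul hx.le]
    congr 1
    ring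
  have keyinv : ∀ (e : ℝ) (n : ℕ), e = -(n / 6) → x ^ e = ((x ^ ((1:ℝ)/6)) ^ n)⁻¹ := by
    intro e n he
    rw [he, Real.rpow_neg hx.le, key _ n rfl]
  rw [show x ^ (-(3:ℝ)/2) = ((x ^ ((1:ℝ)/6)) ^ 9)⁻¹ from keyinv _ 9 (by norm_num),
    show x ^ (-(5:ℝ)/6) = ((x ^ ((1:ℝ)/6)) ^ 5)⁻¹ from keyinv _ 5 (by norm_num),
    show x ^ (-(5:ℝ)/2) = ((x ^ ((1:ℝ)/6)) ^ 15)⁻¹ from keyinv _ 15 (by norm_num),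
    show x ^ (-(11:ℝ)/6) = ((x ^ ((1:ℝ)/6)) ^ 11)⁻¹ from keyinv _ 11 (by norm_num),
    show x ^ (-(7:ℝ)/2) = ((x ^ ((1:ℝ)/6)) ^ 21)⁻¹ from keyinv _ 21 (by norm_num),
    show x ^ ((3:ℝ)/2) = (x ^ ((1:ℝ)/6)) ^ 9 from key _ 9 (by norm_num)]
  set u := x ^ ((1:ℝ)/6) with hu
  have hu0 : (0:ℝ) < u := Real.rpow_pos_of_pos hx _
  have hx6 : x = u ^ 6 := by
    have := key 1 6 (by norm_num)
    rwa [Real.rpow_one] at this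
  rw [hx6]
  field_simp
  ring
end

section
/- Let h : ℝ → ℝ be twice continuously differentiable and define f(x, y) = x^{1/6} h(z) with z = y x^{−3/2} on the open set {(x, y) ∈ ℝ² : x > 0}. Then I₃[f](x, y) = (1/9) x^{−5/3} [ −27 z (1 − 54z²) h′(z) h″(z) + 3(1 − 54z²) h(z) h″(z) − 6(2 − 351z²) h′(z)² − 324 z h(z) h′(z) + 10 h(z)² ], where I₃[f] = 6(x³ − 54y²)(f_{xx} f_{yy} − f_{xy}²) + 24(7x f_x − 12y f_y) f_{xx} + 8(63y f_x − 2x² f_y) f_{xy} + x(7x f_x − 12y f_y) f_{yy} + 180 f_x² − 12x f_y². -/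
/-- For `f(x,y) = x^(1/6) h(z)`, `z = y x^(-3/2)`, on `{x > 0}`:
`I₃[f] = (1/9) x^(-5/3) [ -27z(1-54z²) h' h'' + 3(1-54z²) h h'' - 6(2-351z²) h'²
  - 324 z h h' + 10 h² ]`. -/
theorem I3_of_homogeneous_variation (h : ℝ → ℝ) (hh : ContDiff ℝ 2 h) :
    let f : ℝ → ℝ → ℝ := fun x y => x ^ ((1 : ℝ) / 6) * h (y * x ^ (-(3 : ℝ) / 2))
    let fx : ℝ → ℝ → ℝ := fun x y => deriv (fun t => f t y) x
    let fy : ℝ → ℝ → ℝ := fun x y => deriv (fun t => f x t) y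
    let fxx : ℝ → ℝ → ℝ := fun x y => deriv (fun t => fx t y) x
    let fxy : ℝ → ℝ → ℝ := fun x y => deriv (fun t => fx x t) y
    let fyy : ℝ → ℝ → ℝ := fun x y => deriv (fun t => fy x t) y
    ∀ x y : ℝ, 0 < x → ∀ z : ℝ, z = y * x ^ (-(3 : ℝ) / 2) →
      6 * (x ^ 3 - 54 * y ^ 2) * (fxx x y * fyy x y - (fxy x y) ^ 2)
        + 24 * (7 * x * fx x y - 12 * y * fy x y) * fxx x y
        + 8 * (63 * y * fx x y - 2 * x ^ 2 * fy x y) * fxy x y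
        + x * (7 * x * fx x y - 12 * y * fy x y) * fyy x y
        + 180 * (fx x y) ^ 2 - 12 * x * (fy x y) ^ 2 =
      1 / 9 * x ^ (-(5 : ℝ) / 3) *
        (-27 * z * (1 - 54 * z ^ 2) * deriv h z * deriv (deriv h) z
          + 3 * (1 - 54 * z ^ 2) * h z * deriv (deriv h) z
          - 6 * (2 - 351 * z ^ 2) * (deriv h z) ^ 2
          - 324 * z * h z * deriv h z + 10 * (h z) ^ 2) := by
  intro f fx fy fxx fxy fyy x y hx z hz
  have hd1 : Differentiable ℝ h := hh.differentiable two_ne_zero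
  have hd2 : Differentiable ℝ (deriv h) := by
    have h2 : ContDiff ℝ ((1 : ℕ) + 1) h := by exact_mod_cast hh
    exact (contDiff_succ_iff_deriv.mp h2).2.2.differentiable one_ne_zero
  -- generic chain rule for t ↦ g (b * t ^ (-3/2))
  have hcompg : ∀ g : ℝ → ℝ, Differentiable ℝ g → ∀ a : ℝ, 0 < a → ∀ b : ℝ,
      HasDerivAt (fun t => g (b * t ^ (-(3:ℝ)/2)))
        (deriv g (b * a ^ (-(3:ℝ)/2)) * (b * (-(3:ℝ)/2 * a ^ (-(3:ℝ)/2 - 1)))) a := by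
    intro g hg a ha b
    exact ((hg _).hasDerivAt).comp a
      ((Real.hasDerivAt_rpow_const (Or.inl ha.ne')).const_mul b)
  -- first derivative in x
  have fxval : ∀ a : ℝ, 0 < a → ∀ b : ℝ, fx a b =
      (1:ℝ)/6 * a ^ (-(5:ℝ)/6) * h (b * a ^ (-(3:ℝ)/2))
        - (3:ℝ)/2 * a ^ (-(7:ℝ)/3) * (b * deriv h (b * a ^ (-(3:ℝ)/2))) := by
    intro a ha b
    have key : HasDerivAt (fun t => t ^ ((1:ℝ)/6) * h (b * t ^ (-(3:ℝ)/2)))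
        ((1:ℝ)/6 * a ^ ((1:ℝ)/6 - 1) * h (b * a ^ (-(3:ℝ)/2))
          + a ^ ((1:ℝ)/6) * (deriv h (b * a ^ (-(3:ℝ)/2)) *
            (b * (-(3:ℝ)/2 * a ^ (-(3:ℝ)/2 - 1))))) a :=
      (Real.hasDerivAt_rpow_const (Or.inl ha.ne')).mul (hcompg h hd1 a ha b)
    simp only [fx, f]
    rw [key.deriv, show (1:ℝ)/6 - 1 = -(5:ℝ)/6 by norm_num,
      show -(3:ℝ)/2 - 1 = -(5:ℝ)/2 by norm_num]
    have e : a ^ ((1:ℝ)/6) * a ^ (-(5:ℝ)/2) = a ^ (-(7:ℝ)/3) := by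
      rw [← Real.rpow_add ha]; norm_num
    linear_combination (-(3:ℝ)/2 * b * deriv h (b * a ^ (-(3:ℝ)/2))) * e
  -- first derivative in y
  have fyval : ∀ b : ℝ, fy x b = x ^ (-(4:ℝ)/3) * deriv h (b * x ^ (-(3:ℝ)/2)) := by
    intro b
    have key : HasDerivAt (fun t => x ^ ((1:ℝ)/6) * h (t * x ^ (-(3:ℝ)/2)))
        (x ^ ((1:ℝ)/6) * (deriv h (b * x ^ (-(3:ℝ)/2)) * (1 * x ^ (-(3:ℝ)/2)))) b :=
      (((hd1 _).hasDerivAt).comp b ((hasDerivAt_id b).mul_const _)).const_mul _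
    simp only [fy, f]
    rw [key.deriv]
    have e : x ^ ((1:ℝ)/6) * x ^ (-(3:ℝ)/2) = x ^ (-(4:ℝ)/3) := by
      rw [← Real.rpow_add hx]; norm_num
    linear_combination deriv h (b * x ^ (-(3:ℝ)/2)) * e
  -- second derivative in y
  have fyyval : fyy x y = x ^ (-(17:ℝ)/6) * deriv (deriv h) (y * x ^ (-(3:ℝ)/2)) := by
    have hfun : (fun t => fy x t)
        = fun t => x ^ (-(4:ℝ)/3) * deriv h (t * x ^ (-(3:ℝ)/2)) := funext fun t => fyval t
    have key : HasDerivAt (fun t => x ^ (-(4:ℝ)/3) * deriv h (t * x ^ (-(3:ℝ)/2)))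
        (x ^ (-(4:ℝ)/3) * (deriv (deriv h) (y * x ^ (-(3:ℝ)/2)) * (1 * x ^ (-(3:ℝ)/2)))) y :=
      (((hd2 _).hasDerivAt).comp y ((hasDerivAt_id y).mul_const _)).const_mul _
    simp only [fyy]
    rw [hfun, key.deriv]
    have e : x ^ (-(4:ℝ)/3) * x ^ (-(3:ℝ)/2) = x ^ (-(17:ℝ)/6) := by
      rw [← Real.rpow_add hx]; norm_num
    linear_combination deriv (deriv h) (y * x ^ (-(3:ℝ)/2)) * e
  -- mixed second derivative
  have fxyval : fxy x y = -(4:ℝ)/3 * x ^ (-(7:ℝ)/3) * deriv h (y * x ^ (-(3:ℝ)/2))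
      - (3:ℝ)/2 * y * x ^ (-(23:ℝ)/6) * deriv (deriv h) (y * x ^ (-(3:ℝ)/2)) := by
    have hfun : (fun t => fx x t) = fun t =>
        (1:ℝ)/6 * x ^ (-(5:ℝ)/6) * h (t * x ^ (-(3:ℝ)/2))
          - (3:ℝ)/2 * x ^ (-(7:ℝ)/3) * (t * deriv h (t * x ^ (-(3:ℝ)/2))) :=
      funext fun t => fxval x hx t
    have key : HasDerivAt (fun t =>
        (1:ℝ)/6 * x ^ (-(5:ℝ)/6) * h (t * x ^ (-(3:ℝ)/2))
          - (3:ℝ)/2 * x ^ (-(7:ℝ)/3) * (t * deriv h (t * x ^ (-(3:ℝ)/2))))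
        ((1:ℝ)/6 * x ^ (-(5:ℝ)/6) * (deriv h (y * x ^ (-(3:ℝ)/2)) * (1 * x ^ (-(3:ℝ)/2)))
          - (3:ℝ)/2 * x ^ (-(7:ℝ)/3) *
            (1 * deriv h (y * x ^ (-(3:ℝ)/2)) + y * (deriv (deriv h) (y * x ^ (-(3:ℝ)/2))
              * (1 * x ^ (-(3:ℝ)/2))))) y := by
      exact ((((hd1 _).hasDerivAt).comp y ((hasDerivAt_id y).mul_const _)).const_mul _).sub
        (((hasDerivAt_id y).mul
          (((hd2 _).hasDerivAt).comp y ((hasDerivAt_id y).mul_const _))).const_mul _)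
    simp only [fxy]
    rw [hfun, key.deriv]
    have e1 : x ^ (-(5:ℝ)/6) * x ^ (-(3:ℝ)/2) = x ^ (-(7:ℝ)/3) := by
      rw [← Real.rpow_add hx]; norm_num
    have e2 : x ^ (-(7:ℝ)/3) * x ^ (-(3:ℝ)/2) = x ^ (-(23:ℝ)/6) := by
      rw [← Real.rpow_add hx]; norm_num
    linear_combination ((1:ℝ)/6 * deriv h (y * x ^ (-(3:ℝ)/2))) * e1
      - ((3:ℝ)/2 * y * deriv (deriv h) (y * x ^ (-(3:ℝ)/2))) * e2
  -- second derivative in x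
  have fxxval : fxx x y = -(5:ℝ)/36 * x ^ (-(11:ℝ)/6) * h (y * x ^ (-(3:ℝ)/2))
      + (13:ℝ)/4 * y * x ^ (-(10:ℝ)/3) * deriv h (y * x ^ (-(3:ℝ)/2))
      + (9:ℝ)/4 * y ^ 2 * x ^ (-(29:ℝ)/6) * deriv (deriv h) (y * x ^ (-(3:ℝ)/2)) := by
    have hev : (fun t => fx t y) =ᶠ[nhds x] fun t =>
        (1:ℝ)/6 * t ^ (-(5:ℝ)/6) * h (y * t ^ (-(3:ℝ)/2))
          - (3:ℝ)/2 * t ^ (-(7:ℝ)/3) * (y * deriv h (y * t ^ (-(3:ℝ)/2))) := by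
      filter_upwards [Ioi_mem_nhds hx] with t ht using fxval t ht y
    have key : HasDerivAt (fun t =>
        (1:ℝ)/6 * t ^ (-(5:ℝ)/6) * h (y * t ^ (-(3:ℝ)/2))
          - (3:ℝ)/2 * t ^ (-(7:ℝ)/3) * (y * deriv h (y * t ^ (-(3:ℝ)/2))))
        (((1:ℝ)/6 * (-(5:ℝ)/6 * x ^ (-(5:ℝ)/6 - 1))) * h (y * x ^ (-(3:ℝ)/2))
            + ((1:ℝ)/6 * x ^ (-(5:ℝ)/6)) * (deriv h (y * x ^ (-(3:ℝ)/2)) *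
              (y * (-(3:ℝ)/2 * x ^ (-(3:ℝ)/2 - 1))))
          - (((3:ℝ)/2 * (-(7:ℝ)/3 * x ^ (-(7:ℝ)/3 - 1))) *
              (y * deriv h (y * x ^ (-(3:ℝ)/2)))
            + ((3:ℝ)/2 * x ^ (-(7:ℝ)/3)) * (y * (deriv (deriv h) (y * x ^ (-(3:ℝ)/2)) *
              (y * (-(3:ℝ)/2 * x ^ (-(3:ℝ)/2 - 1))))))) x := by
      exact (((Real.hasDerivAt_rpow_const (Or.inl hx.ne')).const_mul ((1:ℝ)/6)).mul
          (hcompg h hd1 x hx y)).sub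
        (((Real.hasDerivAt_rpow_const (Or.inl hx.ne')).const_mul ((3:ℝ)/2)).mul
          ((hcompg (deriv h) hd2 x hx y).const_mul y))
    simp only [fxx]
    rw [hev.deriv_eq, key.deriv, show -(5:ℝ)/6 - 1 = -(11:ℝ)/6 by norm_num,
      show -(7:ℝ)/3 - 1 = -(10:ℝ)/3 by norm_num, show -(3:ℝ)/2 - 1 = -(5:ℝ)/2 by norm_num]
    have e3 : x ^ (-(5:ℝ)/6) * x ^ (-(5:ℝ)/2) = x ^ (-(10:ℝ)/3) := by
      rw [← Real.rpow_add hx]; norm_num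
    have e4 : x ^ (-(7:ℝ)/3) * x ^ (-(5:ℝ)/2) = x ^ (-(29:ℝ)/6) := by
      rw [← Real.rpow_add hx]; norm_num
    linear_combination (-(1:ℝ)/4 * y * deriv h (y * x ^ (-(3:ℝ)/2))) * e3
      + ((9:ℝ)/4 * y ^ 2 * deriv (deriv h) (y * x ^ (-(3:ℝ)/2))) * e4
  -- put everything in terms of u = x^(1/6) and z
  obtain ⟨u, hu⟩ : ∃ u : ℝ, u = x ^ ((1:ℝ)/6) := ⟨_, rfl⟩
  have hu0 : (0:ℝ) < u := hu ▸ Real.rpow_pos_of_pos hx _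
  have hrp : ∀ (n : ℕ) (r : ℝ), r = -(n:ℝ)/6 → x ^ r = (u ^ n)⁻¹ := by
    intro n r hr
    rw [hr, show -(n:ℝ)/6 = ((1:ℝ)/6) * (-(n:ℝ)) by ring, Real.rpow_mul hx.le, ← hu,
      Real.rpow_neg hu0.le, Real.rpow_natCast]
  have hx6 : x = u ^ 6 := by
    rw [hu, ← Real.rpow_natCast (x ^ ((1:ℝ)/6)) 6, ← Real.rpow_mul hx.le]
    norm_num
  have hy : y = z * u ^ 9 := by
    rw [hz, hrp 9 _ (by norm_num)]
    field_simp
  rw [fxxval, fxyval, fyyval, fxval x hx y, fyval y, ← hz,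
    hrp 5 _ (by norm_num : -(5:ℝ)/6 = -((5:ℕ):ℝ)/6),
    hrp 14 _ (by norm_num : -(7:ℝ)/3 = -((14:ℕ):ℝ)/6),
    hrp 8 _ (by norm_num : -(4:ℝ)/3 = -((8:ℕ):ℝ)/6),
    hrp 11 _ (by norm_num : -(11:ℝ)/6 = -((11:ℕ):ℝ)/6),
    hrp 20 _ (by norm_num : -(10:ℝ)/3 = -((20:ℕ):ℝ)/6),
    hrp 29 _ (by norm_num : -(29:ℝ)/6 = -((29:ℕ):ℝ)/6),
    hrp 23 _ (by norm_num : -(23:ℝ)/6 = -((23:ℕ):ℝ)/6),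
    hrp 17 _ (by norm_num : -(17:ℝ)/6 = -((17:ℕ):ℝ)/6),
    hrp 10 _ (by norm_num : -(5:ℝ)/3 = -((10:ℕ):ℝ)/6),
    hy, hx6]
  field_simp
  ring
end

section
/- Let R be a real constant, let k ≥ 2 be a natural number, and define F_k(x, y) = x^{1/6} (1 − 54 y² x^{−3})^k on the open set {(x, y) ∈ ℝ² : x > 0}. Then, writing z = y x^{−3/2}, (Rx − 36y) (F_k)_x + ((3/2)Ry − x²) (F_k)_y = (1/6) x^{1/6} (1 − 54z²)^k [ R + 36(18k − 1) x^{−1} y ]. -/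
/-- For `F_k(x,y) = x^(1/6) (1 - 54 y² x^(-3))^k` and `z = y x^(-3/2)`, on `{x > 0}`:
`I₁[F_k] = (1/6) x^(1/6) (1 - 54z²)^k [ R + 36(18k - 1) x⁻¹ y ]`. -/
theorem I1_of_Fk (R : ℝ) (k : ℕ) (hk : 2 ≤ k) :
    let F : ℝ → ℝ → ℝ := fun x y => x ^ ((1 : ℝ) / 6) * (1 - 54 * y ^ 2 * (x ^ 3)⁻¹) ^ k
    let Fx : ℝ → ℝ → ℝ := fun x y => deriv (fun t => F t y) x
    let Fy : ℝ → ℝ → ℝ := fun x y => deriv (fun t => F x t) y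
    ∀ x y : ℝ, 0 < x → ∀ z : ℝ, z = y * x ^ (-(3 : ℝ) / 2) →
      (R * x - 36 * y) * Fx x y + (3 / 2 * R * y - x ^ 2) * Fy x y =
        1 / 6 * x ^ ((1 : ℝ) / 6) * (1 - 54 * z ^ 2) ^ k *
          (R + 36 * (18 * (k : ℝ) - 1) * x⁻¹ * y) := by
  intro F Fx Fy x y hx z hz
  obtain ⟨m, rfl⟩ : ∃ m, k = m + 2 := ⟨k - 2, (Nat.sub_add_cancel hk).symm⟩
  -- z² = y² (x³)⁻¹
  have hz2 : z ^ 2 = y ^ 2 * (x ^ 3)⁻¹ := by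
    have h : ((x : ℝ) ^ (-(3:ℝ)/2)) ^ (2:ℕ) = (x ^ 3)⁻¹ := by
      rw [← Real.rpow_natCast (x ^ (-(3:ℝ)/2)) 2, ← Real.rpow_mul hx.le,
        show (-(3:ℝ)/2) * ((2:ℕ):ℝ) = -((3:ℕ):ℝ) by norm_num,
        Real.rpow_neg hx.le, Real.rpow_natCast]
    rw [hz, mul_pow, h]
  -- derivative in x
  have h1 : HasDerivAt (fun t : ℝ => t ^ ((1:ℝ)/6)) (((1:ℝ)/6) * x ^ ((1:ℝ)/6 - 1)) x :=
    Real.hasDerivAt_rpow_const (Or.inl hx.ne')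
  have h2 : HasDerivAt (fun t : ℝ => (t ^ 3)⁻¹) (-(3 * x ^ 2) / (x ^ 3) ^ 2) x := by
    have := (hasDerivAt_pow 3 x).inv (by positivity)
    simpa [Pi.inv_def] using this
  have hA : HasDerivAt (fun t : ℝ => (1 - 54 * y ^ 2 * (t ^ 3)⁻¹) ^ (m + 2))
      ((m + 2 : ℕ) * (1 - 54 * y ^ 2 * (x ^ 3)⁻¹) ^ (m + 1) *
        (-(54 * y ^ 2 * (-(3 * x ^ 2) / (x ^ 3) ^ 2)))) x := by
    have := ((h2.const_mul (54 * y ^ 2)).const_sub 1).pow (m + 2)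
    simpa [Pi.pow_def, mul_comm, mul_assoc, mul_left_comm] using this
  have hFx : HasDerivAt (fun t : ℝ => F t y)
      (((1:ℝ)/6) * x ^ ((1:ℝ)/6 - 1) * (1 - 54 * y ^ 2 * (x ^ 3)⁻¹) ^ (m + 2) +
        x ^ ((1:ℝ)/6) * ((m + 2 : ℕ) * (1 - 54 * y ^ 2 * (x ^ 3)⁻¹) ^ (m + 1) *
          (-(54 * y ^ 2 * (-(3 * x ^ 2) / (x ^ 3) ^ 2))))) x := h1.mul hA
  -- derivative in y
  have hB : HasDerivAt (fun t : ℝ => 1 - 54 * t ^ 2 * (x ^ 3)⁻¹)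
      (-(54 * (2 * y) * (x ^ 3)⁻¹)) y := by
    have := (((hasDerivAt_pow 2 y).const_mul 54).mul_const ((x ^ 3)⁻¹)).const_sub 1
    simpa [mul_comm, mul_assoc, mul_left_comm] using this
  have hFy : HasDerivAt (fun t : ℝ => F x t)
      (x ^ ((1:ℝ)/6) * ((m + 2 : ℕ) * (1 - 54 * y ^ 2 * (x ^ 3)⁻¹) ^ (m + 1) *
        (-(54 * (2 * y) * (x ^ 3)⁻¹)))) y :=
    (hB.pow (m + 2)).const_mul _
  have hxpow : x ^ ((1:ℝ)/6 - 1) = x ^ ((1:ℝ)/6) * x⁻¹ := by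
    rw [Real.rpow_sub hx, Real.rpow_one, div_eq_mul_inv]
  simp only [Fx, Fy, hFx.deriv, hFy.deriv, hz2, hxpow]
  push_cast
  have hx3 : (x:ℝ) ^ 3 ≠ 0 := by positivity
  have hx0 : x ≠ 0 := hx.ne'
  field_simp
  ring_nf
  field_simp
  ring
end

section
/- Let k ≥ 2 be a natural number and define F_k(x, y) = x^{1/6} (1 − 54 y² x^{−3})^k on the open set {(x, y) ∈ ℝ² : x > 0}. Then, writing z = y x^{−3/2}, 24x (F_k)_{xx} + 72y (F_k)_{xy} + x² (F_k)_{yy} + 48 (F_k)_x = (2/3) x^{−5/6} (1 − 54z²)^{k−1} [ 54(18k − 1)(18k + 7) z² − (162k − 7) ]. -/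
lemma aux_ux (s x : ℝ) (hx : x ≠ 0) :
    HasDerivAt (fun t : ℝ => 1 - 54 * s ^ 2 * (t ^ 3)⁻¹) (162 * s ^ 2 * (x ^ 4)⁻¹) x := by
  have h1 : HasDerivAt (fun t : ℝ => (t ^ 3)⁻¹) (-(3 * x ^ 2) / ((x ^ 3) ^ 2)) x := by
    have h := (hasDerivAt_pow 3 x).inv (pow_ne_zero 3 hx)
    refine h.congr_deriv ?_
    norm_num
  have h2 := (h1.const_mul (54 * s ^ 2)).const_sub 1
  refine h2.congr_deriv ?_
  field_simp
  ring

lemma aux_uy (x b : ℝ) :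
    HasDerivAt (fun s : ℝ => 1 - 54 * s ^ 2 * (x ^ 3)⁻¹) (-(108 * b * (x ^ 3)⁻¹)) b := by
  have h1 : HasDerivAt (fun s : ℝ => 54 * s ^ 2 * (x ^ 3)⁻¹) (108 * b * (x ^ 3)⁻¹) b := by
    have h := ((hasDerivAt_pow 2 b).const_mul 54).mul_const ((x ^ 3)⁻¹)
    refine h.congr_deriv ?_
    push_cast
    ring
  have h2 := h1.const_sub 1
  convert h2 using 1

lemma aux_rpow16 (x : ℝ) (hx : 0 < x) :
    HasDerivAt (fun t : ℝ => t ^ ((1 : ℝ) / 6)) (1 / 6 * (x ^ ((1 : ℝ) / 6) * x⁻¹)) x := by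
  have h := Real.hasDerivAt_rpow_const (x := x) (p := (1 : ℝ) / 6) (Or.inl hx.ne')
  convert h using 1
  rw [show (1 : ℝ) / 6 - 1 = 1 / 6 + (-1) by norm_num, Real.rpow_add hx, Real.rpow_neg_one]

lemma aux_Fx (n : ℕ) (s x : ℝ) (hx : 0 < x) :
    HasDerivAt (fun t : ℝ => t ^ ((1 : ℝ) / 6) * (1 - 54 * s ^ 2 * (t ^ 3)⁻¹) ^ (n + 2))
      (x ^ ((1 : ℝ) / 6) * (1 / 6 * x⁻¹ * (1 - 54 * s ^ 2 * (x ^ 3)⁻¹) ^ (n + 2)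
        + 162 * ((n : ℝ) + 2) * s ^ 2 * (x ^ 4)⁻¹ * (1 - 54 * s ^ 2 * (x ^ 3)⁻¹) ^ (n + 1))) x := by
  have h := (aux_rpow16 x hx).mul ((aux_ux s x hx.ne').pow (n + 2))
  refine h.congr_deriv ?_
  simp only [Pi.pow_apply, Pi.inv_apply, Pi.mul_apply]
  rw [show n + 2 - 1 = n + 1 from by omega]
  push_cast
  ring

lemma aux_Fxx (n : ℕ) (s x : ℝ) (hx : 0 < x) :
    HasDerivAt (fun t : ℝ => t ^ ((1 : ℝ) / 6) * (1 / 6 * t⁻¹ * (1 - 54 * s ^ 2 * (t ^ 3)⁻¹) ^ (n + 2)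
        + 162 * ((n : ℝ) + 2) * s ^ 2 * (t ^ 4)⁻¹ * (1 - 54 * s ^ 2 * (t ^ 3)⁻¹) ^ (n + 1)))
      (x ^ ((1 : ℝ) / 6) * (-(5 / 36) * (x ^ 2)⁻¹ * (1 - 54 * s ^ 2 * (x ^ 3)⁻¹) ^ (n + 2)
        - 594 * ((n : ℝ) + 2) * s ^ 2 * (x ^ 5)⁻¹ * (1 - 54 * s ^ 2 * (x ^ 3)⁻¹) ^ (n + 1)
        + 26244 * ((n : ℝ) + 2) * ((n : ℝ) + 1) * s ^ 4 * (x ^ 8)⁻¹ * (1 - 54 * s ^ 2 * (x ^ 3)⁻¹) ^ n)) x := by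
  have first := ((hasDerivAt_inv hx.ne').const_mul ((1 : ℝ) / 6)).mul ((aux_ux s x hx.ne').pow (n + 2))
  have second := (((hasDerivAt_pow 4 x).inv (pow_ne_zero 4 hx.ne')).const_mul
    (162 * ((n : ℝ) + 2) * s ^ 2)).mul ((aux_ux s x hx.ne').pow (n + 1))
  have h := (aux_rpow16 x hx).mul (first.add second)
  refine h.congr_deriv ?_
  simp only [Pi.pow_apply, Pi.inv_apply, Pi.mul_apply, Pi.add_apply]
  rw [show n + 2 - 1 = n + 1 from by omega, show n + 1 - 1 = n from by omega]
  push_cast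
  field_simp
  ring

lemma aux_Fy (n : ℕ) (x b : ℝ) :
    HasDerivAt (fun s : ℝ => x ^ ((1 : ℝ) / 6) * (1 - 54 * s ^ 2 * (x ^ 3)⁻¹) ^ (n + 2))
      (x ^ ((1 : ℝ) / 6) * (((n : ℝ) + 2) * (1 - 54 * b ^ 2 * (x ^ 3)⁻¹) ^ (n + 1) * -(108 * b * (x ^ 3)⁻¹))) b := by
  have h := ((aux_uy x b).pow (n + 2)).const_mul (x ^ ((1 : ℝ) / 6))
  refine h.congr_deriv ?_
  rw [show n + 2 - 1 = n + 1 from by omega]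
  push_cast
  ring

lemma aux_Fyy (n : ℕ) (x b : ℝ) :
    HasDerivAt (fun s : ℝ => x ^ ((1 : ℝ) / 6) * (((n : ℝ) + 2) * (1 - 54 * s ^ 2 * (x ^ 3)⁻¹) ^ (n + 1) * -(108 * s * (x ^ 3)⁻¹)))
      (-(108) * ((n : ℝ) + 2) * (x ^ 3)⁻¹ * x ^ ((1 : ℝ) / 6) * ((1 - 54 * b ^ 2 * (x ^ 3)⁻¹) ^ (n + 1)
        + b * ((n : ℝ) + 1) * (1 - 54 * b ^ 2 * (x ^ 3)⁻¹) ^ n * -(108 * b * (x ^ 3)⁻¹))) b := by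
  have p1 := ((aux_uy x b).pow (n + 1)).const_mul ((n : ℝ) + 2)
  have p2 : HasDerivAt (fun s : ℝ => -(108 * s * (x ^ 3)⁻¹)) (-(108 * (x ^ 3)⁻¹)) b := by
    have h := (((hasDerivAt_id b).const_mul (108 : ℝ)).mul_const ((x ^ 3)⁻¹)).neg
    refine h.congr_deriv ?_
    ring
  have h := (p1.mul p2).const_mul (x ^ ((1 : ℝ) / 6))
  refine h.congr_deriv ?_
  simp only [Pi.pow_apply, Pi.inv_apply, Pi.mul_apply]
  rw [show n + 1 - 1 = n from by omega]
  push_cast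
  ring

lemma aux_Fxy (n : ℕ) (x b : ℝ) :
    HasDerivAt (fun s : ℝ => x ^ ((1 : ℝ) / 6) * (1 / 6 * x⁻¹ * (1 - 54 * s ^ 2 * (x ^ 3)⁻¹) ^ (n + 2)
        + 162 * ((n : ℝ) + 2) * s ^ 2 * (x ^ 4)⁻¹ * (1 - 54 * s ^ 2 * (x ^ 3)⁻¹) ^ (n + 1)))
      (x ^ ((1 : ℝ) / 6) * (1 / 6 * x⁻¹ * (((n : ℝ) + 2) * (1 - 54 * b ^ 2 * (x ^ 3)⁻¹) ^ (n + 1) * -(108 * b * (x ^ 3)⁻¹))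
        + 162 * ((n : ℝ) + 2) * (x ^ 4)⁻¹ * (2 * b * (1 - 54 * b ^ 2 * (x ^ 3)⁻¹) ^ (n + 1)
          + b ^ 2 * ((n : ℝ) + 1) * (1 - 54 * b ^ 2 * (x ^ 3)⁻¹) ^ n * -(108 * b * (x ^ 3)⁻¹)))) b := by
  have inner1 := ((aux_uy x b).pow (n + 2)).const_mul (1 / 6 * x⁻¹ : ℝ)
  have A := ((hasDerivAt_pow 2 b).const_mul (162 * ((n : ℝ) + 2))).mul_const ((x ^ 4)⁻¹)
  have inner2 := A.mul ((aux_uy x b).pow (n + 1))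
  have h := (inner1.add inner2).const_mul (x ^ ((1 : ℝ) / 6))
  refine h.congr_deriv ?_
  simp only [Pi.pow_apply, Pi.inv_apply, Pi.mul_apply]
  rw [show n + 2 - 1 = n + 1 from by omega, show n + 1 - 1 = n from by omega]
  push_cast
  ring

/-- For `F_k(x,y) = x^(1/6) (1 - 54 y² x^(-3))^k` and `z = y x^(-3/2)`, on `{x > 0}`:
`I₂[F_k] = (2/3) x^(-5/6) (1 - 54z²)^(k-1) [ 54(18k-1)(18k+7) z² - (162k - 7) ]`. -/
theorem I2_of_Fk (k : ℕ) (hk : 2 ≤ k) :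
    let F : ℝ → ℝ → ℝ := fun x y => x ^ ((1 : ℝ) / 6) * (1 - 54 * y ^ 2 * (x ^ 3)⁻¹) ^ k
    let Fx : ℝ → ℝ → ℝ := fun x y => deriv (fun t => F t y) x
    let Fy : ℝ → ℝ → ℝ := fun x y => deriv (fun t => F x t) y
    let Fxx : ℝ → ℝ → ℝ := fun x y => deriv (fun t => Fx t y) x
    let Fxy : ℝ → ℝ → ℝ := fun x y => deriv (fun t => Fx x t) y
    let Fyy : ℝ → ℝ → ℝ := fun x y => deriv (fun t => Fy x t) y
    ∀ x y : ℝ, 0 < x → ∀ z : ℝ, z = y * x ^ (-(3 : ℝ) / 2) →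
      24 * x * Fxx x y + 72 * y * Fxy x y + x ^ 2 * Fyy x y + 48 * Fx x y =
        2 / 3 * x ^ (-(5 : ℝ) / 6) * (1 - 54 * z ^ 2) ^ (k - 1) *
          (54 * (18 * (k : ℝ) - 1) * (18 * (k : ℝ) + 7) * z ^ 2 - (162 * (k : ℝ) - 7)) := by
  intro F Fx Fy Fxx Fxy Fyy x y hx z hz
  obtain ⟨m, rfl⟩ : ∃ m, k = m + 2 := ⟨k - 2, by omega⟩
  have hx0 : x ≠ 0 := hx.ne'
  -- closed form for Fx
  have hFx : ∀ t : ℝ, 0 < t → ∀ s : ℝ, Fx t s =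
      t ^ ((1 : ℝ) / 6) * (1 / 6 * t⁻¹ * (1 - 54 * s ^ 2 * (t ^ 3)⁻¹) ^ (m + 2)
        + 162 * ((m : ℝ) + 2) * s ^ 2 * (t ^ 4)⁻¹ * (1 - 54 * s ^ 2 * (t ^ 3)⁻¹) ^ (m + 1)) := by
    intro t ht s
    exact (aux_Fx m s t ht).deriv
  -- closed form for Fy
  have hFy : ∀ s : ℝ, Fy x s =
      x ^ ((1 : ℝ) / 6) * (((m : ℝ) + 2) * (1 - 54 * s ^ 2 * (x ^ 3)⁻¹) ^ (m + 1) * -(108 * s * (x ^ 3)⁻¹)) :=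
    fun s => (aux_Fy m x s).deriv
  -- Fxx
  have hFxx : Fxx x y = x ^ ((1 : ℝ) / 6) * (-(5 / 36) * (x ^ 2)⁻¹ * (1 - 54 * y ^ 2 * (x ^ 3)⁻¹) ^ (m + 2)
        - 594 * ((m : ℝ) + 2) * y ^ 2 * (x ^ 5)⁻¹ * (1 - 54 * y ^ 2 * (x ^ 3)⁻¹) ^ (m + 1)
        + 26244 * ((m : ℝ) + 2) * ((m : ℝ) + 1) * y ^ 4 * (x ^ 8)⁻¹ * (1 - 54 * y ^ 2 * (x ^ 3)⁻¹) ^ m) := by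
    have hev : (fun t => Fx t y) =ᶠ[nhds x]
        (fun t : ℝ => t ^ ((1 : ℝ) / 6) * (1 / 6 * t⁻¹ * (1 - 54 * y ^ 2 * (t ^ 3)⁻¹) ^ (m + 2)
          + 162 * ((m : ℝ) + 2) * y ^ 2 * (t ^ 4)⁻¹ * (1 - 54 * y ^ 2 * (t ^ 3)⁻¹) ^ (m + 1))) := by
      filter_upwards [eventually_gt_nhds hx] with t ht
      exact hFx t ht y
    exact hev.deriv_eq.trans (aux_Fxx m y x hx).deriv
  -- Fxy
  have hFxy : Fxy x y = x ^ ((1 : ℝ) / 6) * (1 / 6 * x⁻¹ * (((m : ℝ) + 2) * (1 - 54 * y ^ 2 * (x ^ 3)⁻¹) ^ (m + 1) * -(108 * y * (x ^ 3)⁻¹))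
        + 162 * ((m : ℝ) + 2) * (x ^ 4)⁻¹ * (2 * y * (1 - 54 * y ^ 2 * (x ^ 3)⁻¹) ^ (m + 1)
          + y ^ 2 * ((m : ℝ) + 1) * (1 - 54 * y ^ 2 * (x ^ 3)⁻¹) ^ m * -(108 * y * (x ^ 3)⁻¹))) := by
    have hfun : (fun s => Fx x s) = (fun s : ℝ => x ^ ((1 : ℝ) / 6) * (1 / 6 * x⁻¹ * (1 - 54 * s ^ 2 * (x ^ 3)⁻¹) ^ (m + 2)
        + 162 * ((m : ℝ) + 2) * s ^ 2 * (x ^ 4)⁻¹ * (1 - 54 * s ^ 2 * (x ^ 3)⁻¹) ^ (m + 1))) :=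
      funext fun s => hFx x hx s
    show deriv (fun s => Fx x s) y = _
    rw [hfun]
    exact (aux_Fxy m x y).deriv
  -- Fyy
  have hFyy : Fyy x y = -(108) * ((m : ℝ) + 2) * (x ^ 3)⁻¹ * x ^ ((1 : ℝ) / 6) * ((1 - 54 * y ^ 2 * (x ^ 3)⁻¹) ^ (m + 1)
        + y * ((m : ℝ) + 1) * (1 - 54 * y ^ 2 * (x ^ 3)⁻¹) ^ m * -(108 * y * (x ^ 3)⁻¹)) := by
    have hfun : (fun s => Fy x s) = (fun s : ℝ => x ^ ((1 : ℝ) / 6) * (((m : ℝ) + 2) * (1 - 54 * s ^ 2 * (x ^ 3)⁻¹) ^ (m + 1) * -(108 * s * (x ^ 3)⁻¹))) :=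
      funext hFy
    show deriv (fun s => Fy x s) y = _
    rw [hfun]
    exact (aux_Fyy m x y).deriv
  rw [hFxx, hFxy, hFyy, hFx x hx y]
  rw [show m + 2 - 1 = m + 1 from by omega]
  have hz2 : z ^ 2 = y ^ 2 * (x ^ 3)⁻¹ := by
    rw [hz, mul_pow, ← Real.rpow_natCast (x ^ (-(3 : ℝ) / 2)) 2, ← Real.rpow_mul hx.le]
    norm_num
  rw [hz2]
  rw [show (1 - 54 * (y ^ 2 * (x ^ 3)⁻¹) : ℝ) = 1 - 54 * y ^ 2 * (x ^ 3)⁻¹ by ring]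
  rw [show x ^ (-(5 : ℝ) / 6) = x ^ ((1 : ℝ) / 6) * x⁻¹ from by
    rw [show -(5 : ℝ) / 6 = 1 / 6 + (-1) by norm_num, Real.rpow_add hx, Real.rpow_neg_one]]
  simp only [pow_succ]
  generalize ((1 - 54 * y ^ 2 * (x ^ 3)⁻¹ : ℝ) ^ m) = w
  push_cast
  field_simp
  ring
end

section
/- Let k ≥ 2 be a natural number and define F_k(x, y) = x^{1/6} (1 − 54 y² x^{−3})^k on the open set {(x, y) ∈ ℝ² : x > 0}. Then, writing z = y x^{−3/2}, 6(x³ − 54y²)((F_k)_{xx}(F_k)_{yy} − (F_k)_{xy}²) + 24(7x (F_k)_x − 12y (F_k)_y)(F_k)_{xx} + 8(63y (F_k)_x − 2x² (F_k)_y)(F_k)_{xy} + x(7x (F_k)_x − 12y (F_k)_y)(F_k)_{yy} + 180 (F_k)_x² − 12x (F_k)_y² = (2/9) x^{−5/3} (1 − 54z²)^{2k−2} [ 2916(18k − 1)²(18k + 5) z⁴ − 108(1944k² − 162k + 5) z² − (162k − 5) ]. -/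
open Real Filter

lemma hgx (y t : ℝ) (ht : 0 < t) :
    HasDerivAt (fun t : ℝ => 1 - 54 * y ^ 2 * (t ^ 3)⁻¹) (162 * y ^ 2 * (t ^ 4)⁻¹) t := by
  have h := (((hasDerivAt_pow 3 t).inv (pow_ne_zero 3 ht.ne')).const_mul (54 * y ^ 2)).const_sub 1
  refine h.congr_deriv ?_
  push_cast
  field_simp
  ring

lemma hgy (x y : ℝ) :
    HasDerivAt (fun s : ℝ => 1 - 54 * s ^ 2 * (x ^ 3)⁻¹) (-(108 * y * (x ^ 3)⁻¹)) y := by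
  have h := (((hasDerivAt_pow 2 y).const_mul 54).mul_const ((x ^ 3)⁻¹)).const_sub 1
  refine h.congr_deriv ?_
  push_cast
  ring

lemma hFxAt (k : ℕ) (y t : ℝ) (ht : 0 < t) :
    HasDerivAt (fun t : ℝ => t ^ ((1 : ℝ) / 6) * (1 - 54 * y ^ 2 * (t ^ 3)⁻¹) ^ k)
      (1 / 6 * t ^ ((1 : ℝ) / 6) * t⁻¹ * (1 - 54 * y ^ 2 * (t ^ 3)⁻¹) ^ k
        + 162 * (k : ℝ) * y ^ 2 * t ^ ((1 : ℝ) / 6) * (t ^ 4)⁻¹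
          * (1 - 54 * y ^ 2 * (t ^ 3)⁻¹) ^ (k - 1)) t := by
  have h := (Real.hasDerivAt_rpow_const (p := (1 : ℝ) / 6) (Or.inl ht.ne')).mul
    ((hgx y t ht).pow k)
  refine h.congr_deriv ?_
  simp only [Pi.pow_apply, Pi.mul_apply, Pi.inv_apply, id_eq]
  have e1 : t ^ ((1 : ℝ) / 6 - 1) = t ^ ((1 : ℝ) / 6) * t⁻¹ := by
    rw [Real.rpow_sub ht, Real.rpow_one, div_eq_mul_inv]
  rw [e1]
  field_simp

lemma hFyAt (k : ℕ) (x y : ℝ) :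
    HasDerivAt (fun s : ℝ => x ^ ((1 : ℝ) / 6) * (1 - 54 * s ^ 2 * (x ^ 3)⁻¹) ^ k)
      (-108 * (k : ℝ) * y * x ^ ((1 : ℝ) / 6) * (x ^ 3)⁻¹
        * (1 - 54 * y ^ 2 * (x ^ 3)⁻¹) ^ (k - 1)) y := by
  have h := ((hgy x y).pow k).const_mul (x ^ ((1 : ℝ) / 6))
  refine h.congr_deriv ?_
  ring

lemma hFxxAt (k : ℕ) (hk : 2 ≤ k) (y t : ℝ) (ht : 0 < t) :
    HasDerivAt (fun t : ℝ => 1 / 6 * t ^ ((1 : ℝ) / 6) * t⁻¹ * (1 - 54 * y ^ 2 * (t ^ 3)⁻¹) ^ k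
        + 162 * (k : ℝ) * y ^ 2 * t ^ ((1 : ℝ) / 6) * (t ^ 4)⁻¹
          * (1 - 54 * y ^ 2 * (t ^ 3)⁻¹) ^ (k - 1))
      (-(5 : ℝ) / 36 * t ^ ((1 : ℝ) / 6) * (t ^ 2)⁻¹ * (1 - 54 * y ^ 2 * (t ^ 3)⁻¹) ^ k
        - 594 * (k : ℝ) * y ^ 2 * t ^ ((1 : ℝ) / 6) * (t ^ 5)⁻¹
          * (1 - 54 * y ^ 2 * (t ^ 3)⁻¹) ^ (k - 1)
        + 26244 * (k : ℝ) * ((k : ℝ) - 1) * y ^ 4 * t ^ ((1 : ℝ) / 6) * (t ^ 8)⁻¹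
          * (1 - 54 * y ^ 2 * (t ^ 3)⁻¹) ^ (k - 2)) t := by
  have hA := (((Real.hasDerivAt_rpow_const (p := (1 : ℝ) / 6) (Or.inl ht.ne')).const_mul
      ((1 : ℝ) / 6)).mul (hasDerivAt_inv ht.ne')).mul ((hgx y t ht).pow k)
  have hB := (((Real.hasDerivAt_rpow_const (p := (1 : ℝ) / 6) (Or.inl ht.ne')).const_mul
      (162 * (k : ℝ) * y ^ 2)).mul ((hasDerivAt_pow 4 t).inv (pow_ne_zero 4 ht.ne'))).mul
      ((hgx y t ht).pow (k - 1))
  have h := hA.add hB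
  refine h.congr_deriv ?_
  simp only [Pi.pow_apply, Pi.mul_apply, Pi.inv_apply, id_eq]
  have e1 : t ^ ((1 : ℝ) / 6 - 1) = t ^ ((1 : ℝ) / 6) * t⁻¹ := by
    rw [Real.rpow_sub ht, Real.rpow_one, div_eq_mul_inv]
  have e2 : k - 1 - 1 = k - 2 := by omega
  have e3 : ((k - 1 : ℕ) : ℝ) = (k : ℝ) - 1 := by
    rw [Nat.cast_sub (by omega : 1 ≤ k), Nat.cast_one]
  rw [e1, e2, e3]
  push_cast
  field_simp
  ring

lemma hFxyAt (k : ℕ) (hk : 2 ≤ k) (t y : ℝ) :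
    HasDerivAt (fun s : ℝ => 1 / 6 * t ^ ((1 : ℝ) / 6) * t⁻¹ * (1 - 54 * s ^ 2 * (t ^ 3)⁻¹) ^ k
        + 162 * (k : ℝ) * s ^ 2 * t ^ ((1 : ℝ) / 6) * (t ^ 4)⁻¹
          * (1 - 54 * s ^ 2 * (t ^ 3)⁻¹) ^ (k - 1))
      (306 * (k : ℝ) * y * t ^ ((1 : ℝ) / 6) * (t ^ 4)⁻¹ * (1 - 54 * y ^ 2 * (t ^ 3)⁻¹) ^ (k - 1)
        - 17496 * (k : ℝ) * ((k : ℝ) - 1) * y ^ 3 * t ^ ((1 : ℝ) / 6) * (t ^ 7)⁻¹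
          * (1 - 54 * y ^ 2 * (t ^ 3)⁻¹) ^ (k - 2)) y := by
  have hA := ((hgy t y).pow k).const_mul (1 / 6 * t ^ ((1 : ℝ) / 6) * t⁻¹)
  have hB := ((((hasDerivAt_pow 2 y).const_mul (162 * (k : ℝ))).mul_const
      (t ^ ((1 : ℝ) / 6))).mul_const ((t ^ 4)⁻¹)).mul ((hgy t y).pow (k - 1))
  have h := hA.add hB
  refine h.congr_deriv ?_
  simp only [Pi.pow_apply, Pi.mul_apply, Pi.inv_apply, id_eq]
  have e2 : k - 1 - 1 = k - 2 := by omega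
  have e3 : ((k - 1 : ℕ) : ℝ) = (k : ℝ) - 1 := by
    rw [Nat.cast_sub (by omega : 1 ≤ k), Nat.cast_one]
  rw [e2, e3]
  push_cast
  field_simp
  ring

lemma hFyyAt (k : ℕ) (hk : 2 ≤ k) (t y : ℝ) :
    HasDerivAt (fun s : ℝ => -108 * (k : ℝ) * s * t ^ ((1 : ℝ) / 6) * (t ^ 3)⁻¹
        * (1 - 54 * s ^ 2 * (t ^ 3)⁻¹) ^ (k - 1))
      (-108 * (k : ℝ) * t ^ ((1 : ℝ) / 6) * (t ^ 3)⁻¹ * (1 - 54 * y ^ 2 * (t ^ 3)⁻¹) ^ (k - 1)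
        + 11664 * (k : ℝ) * ((k : ℝ) - 1) * y ^ 2 * t ^ ((1 : ℝ) / 6) * (t ^ 6)⁻¹
          * (1 - 54 * y ^ 2 * (t ^ 3)⁻¹) ^ (k - 2)) y := by
  have h := ((((hasDerivAt_id y).const_mul (-108 * (k : ℝ))).mul_const
      (t ^ ((1 : ℝ) / 6))).mul_const ((t ^ 3)⁻¹)).mul ((hgy t y).pow (k - 1))
  refine h.congr_deriv ?_
  simp only [Pi.pow_apply, Pi.mul_apply, Pi.inv_apply, id_eq]
  have e2 : k - 1 - 1 = k - 2 := by omega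
  have e3 : ((k - 1 : ℕ) : ℝ) = (k : ℝ) - 1 := by
    rw [Nat.cast_sub (by omega : 1 ≤ k), Nat.cast_one]
  rw [e2, e3]
  field_simp
  ring

set_option maxHeartbeats 4000000 in
/-- For `F_k(x,y) = x^(1/6) (1 - 54 y² x^(-3))^k` and `z = y x^(-3/2)`, on `{x > 0}`:
`I₃[F_k] = (2/9) x^(-5/3) (1 - 54z²)^(2k-2)
  [ 2916(18k-1)²(18k+5) z⁴ - 108(1944k² - 162k + 5) z² - (162k - 5) ]`. -/
theorem I3_of_Fk (k : ℕ) (hk : 2 ≤ k) :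
    let F : ℝ → ℝ → ℝ := fun x y => x ^ ((1 : ℝ) / 6) * (1 - 54 * y ^ 2 * (x ^ 3)⁻¹) ^ k
    let Fx : ℝ → ℝ → ℝ := fun x y => deriv (fun t => F t y) x
    let Fy : ℝ → ℝ → ℝ := fun x y => deriv (fun t => F x t) y
    let Fxx : ℝ → ℝ → ℝ := fun x y => deriv (fun t => Fx t y) x
    let Fxy : ℝ → ℝ → ℝ := fun x y => deriv (fun t => Fx x t) y
    let Fyy : ℝ → ℝ → ℝ := fun x y => deriv (fun t => Fy x t) y
    ∀ x y : ℝ, 0 < x → ∀ z : ℝ, z = y * x ^ (-(3 : ℝ) / 2) →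
      6 * (x ^ 3 - 54 * y ^ 2) * (Fxx x y * Fyy x y - (Fxy x y) ^ 2)
        + 24 * (7 * x * Fx x y - 12 * y * Fy x y) * Fxx x y
        + 8 * (63 * y * Fx x y - 2 * x ^ 2 * Fy x y) * Fxy x y
        + x * (7 * x * Fx x y - 12 * y * Fy x y) * Fyy x y
        + 180 * (Fx x y) ^ 2 - 12 * x * (Fy x y) ^ 2 =
      2 / 9 * x ^ (-(5 : ℝ) / 3) * (1 - 54 * z ^ 2) ^ (2 * k - 2) *
        (2916 * (18 * (k : ℝ) - 1) ^ 2 * (18 * (k : ℝ) + 5) * z ^ 4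
          - 108 * (1944 * (k : ℝ) ^ 2 - 162 * (k : ℝ) + 5) * z ^ 2
          - (162 * (k : ℝ) - 5)) := by
  intro F Fx Fy Fxx Fxy Fyy x y hx z hz
  -- first derivatives
  have eFx : ∀ t s : ℝ, 0 < t → Fx t s =
      1 / 6 * t ^ ((1 : ℝ) / 6) * t⁻¹ * (1 - 54 * s ^ 2 * (t ^ 3)⁻¹) ^ k
        + 162 * (k : ℝ) * s ^ 2 * t ^ ((1 : ℝ) / 6) * (t ^ 4)⁻¹
          * (1 - 54 * s ^ 2 * (t ^ 3)⁻¹) ^ (k - 1) :=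
    fun t s ht => (hFxAt k s t ht).deriv
  have eFy : ∀ s : ℝ, Fy x s =
      -108 * (k : ℝ) * s * x ^ ((1 : ℝ) / 6) * (x ^ 3)⁻¹
        * (1 - 54 * s ^ 2 * (x ^ 3)⁻¹) ^ (k - 1) :=
    fun s => (hFyAt k x s).deriv
  -- second derivatives
  have eFxx : Fxx x y =
      -(5 : ℝ) / 36 * x ^ ((1 : ℝ) / 6) * (x ^ 2)⁻¹ * (1 - 54 * y ^ 2 * (x ^ 3)⁻¹) ^ k
        - 594 * (k : ℝ) * y ^ 2 * x ^ ((1 : ℝ) / 6) * (x ^ 5)⁻¹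
          * (1 - 54 * y ^ 2 * (x ^ 3)⁻¹) ^ (k - 1)
        + 26244 * (k : ℝ) * ((k : ℝ) - 1) * y ^ 4 * x ^ ((1 : ℝ) / 6) * (x ^ 8)⁻¹
          * (1 - 54 * y ^ 2 * (x ^ 3)⁻¹) ^ (k - 2) := by
    have hev : (fun t => Fx t y) =ᶠ[nhds x] (fun t =>
        1 / 6 * t ^ ((1 : ℝ) / 6) * t⁻¹ * (1 - 54 * y ^ 2 * (t ^ 3)⁻¹) ^ k
          + 162 * (k : ℝ) * y ^ 2 * t ^ ((1 : ℝ) / 6) * (t ^ 4)⁻¹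
            * (1 - 54 * y ^ 2 * (t ^ 3)⁻¹) ^ (k - 1)) := by
      filter_upwards [eventually_gt_nhds hx] with t ht using eFx t y ht
    show deriv (fun t => Fx t y) x = _
    rw [hev.deriv_eq]
    exact (hFxxAt k hk y x hx).deriv
  have eFxy : Fxy x y =
      306 * (k : ℝ) * y * x ^ ((1 : ℝ) / 6) * (x ^ 4)⁻¹ * (1 - 54 * y ^ 2 * (x ^ 3)⁻¹) ^ (k - 1)
        - 17496 * (k : ℝ) * ((k : ℝ) - 1) * y ^ 3 * x ^ ((1 : ℝ) / 6) * (x ^ 7)⁻¹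
          * (1 - 54 * y ^ 2 * (x ^ 3)⁻¹) ^ (k - 2) := by
    have hfe : (fun s => Fx x s) = (fun s =>
        1 / 6 * x ^ ((1 : ℝ) / 6) * x⁻¹ * (1 - 54 * s ^ 2 * (x ^ 3)⁻¹) ^ k
          + 162 * (k : ℝ) * s ^ 2 * x ^ ((1 : ℝ) / 6) * (x ^ 4)⁻¹
            * (1 - 54 * s ^ 2 * (x ^ 3)⁻¹) ^ (k - 1)) := funext fun s => eFx x s hx
    show deriv (fun s => Fx x s) y = _
    rw [hfe]
    exact (hFxyAt k hk x y).deriv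
  have eFyy : Fyy x y =
      -108 * (k : ℝ) * x ^ ((1 : ℝ) / 6) * (x ^ 3)⁻¹ * (1 - 54 * y ^ 2 * (x ^ 3)⁻¹) ^ (k - 1)
        + 11664 * (k : ℝ) * ((k : ℝ) - 1) * y ^ 2 * x ^ ((1 : ℝ) / 6) * (x ^ 6)⁻¹
          * (1 - 54 * y ^ 2 * (x ^ 3)⁻¹) ^ (k - 2) := by
    have hfe : (fun s => Fy x s) = (fun s =>
        -108 * (k : ℝ) * s * x ^ ((1 : ℝ) / 6) * (x ^ 3)⁻¹
          * (1 - 54 * s ^ 2 * (x ^ 3)⁻¹) ^ (k - 1)) := funext fun s => eFy s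
    show deriv (fun s => Fy x s) y = _
    rw [hfe]
    exact (hFyyAt k hk x y).deriv
  rw [eFx x y hx, eFy y, eFxx, eFxy, eFyy]
  -- algebra
  have hu : (0 : ℝ) < x ^ ((1 : ℝ) / 6) := Real.rpow_pos_of_pos hx _
  set u := x ^ ((1 : ℝ) / 6) with hu_def
  have hxu : u ^ 6 = x := by
    rw [hu_def, ← Real.rpow_natCast (x ^ ((1 : ℝ) / 6)) 6, ← Real.rpow_mul hx.le]
    norm_num
  have h53 : x ^ (-(5 : ℝ) / 3) = (u ^ 10)⁻¹ := by
    rw [show -(5 : ℝ) / 3 = -(5 / 3) by norm_num, Real.rpow_neg hx.le]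
    congr 1
    rw [hu_def, ← Real.rpow_natCast (x ^ ((1 : ℝ) / 6)) 10, ← Real.rpow_mul hx.le]
    norm_num
  have hz2 : z ^ 2 = y ^ 2 * (x ^ 3)⁻¹ := by
    rw [hz, mul_pow, ← Real.rpow_natCast (x ^ (-(3 : ℝ) / 2)) 2, ← Real.rpow_mul hx.le]
    congr 1
    rw [show -(3 : ℝ) / 2 * ((2 : ℕ) : ℝ) = -((3 : ℕ) : ℝ) by push_cast; ring,
      Real.rpow_neg hx.le, Real.rpow_natCast]
  rw [show z ^ 4 = (z ^ 2) ^ 2 by ring, hz2, h53]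
  obtain ⟨m, rfl⟩ : ∃ m, k = m + 2 := ⟨k - 2, by omega⟩
  have e1 : m + 2 - 1 = m + 1 := by omega
  have e2 : m + 2 - 2 = m := by omega
  have e3 : 2 * (m + 2) - 2 = 2 * m + 2 := by omega
  rw [e1, e2, e3]
  push_cast
  rw [← hxu]
  have p1 : ∀ a : ℝ, a ^ (m + 2) = a ^ m * a ^ 2 := fun a => pow_add a m 2
  have p2 : ∀ a : ℝ, a ^ (m + 1) = a ^ m * a := fun a => pow_succ a m
  have p3 : ∀ a : ℝ, a ^ (2 * m + 2) = (a ^ m) ^ 2 * a ^ 2 := fun a => by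
    rw [pow_add, two_mul, pow_add, ← sq]
  simp only [p1, p2, p3]
  field_simp
  ring
end

section
/- Let z ≥ 0 and let φ, p be real numbers with φ + 6z ≤ 0. If 3(1 − 54z²)(1 − 54z² − 9zφ) p − 27zφ³ − 9(1 + 108z²)φ² + 10(1 − 54z²)² ≥ 0, then 3(1 − 54z²) p + 3φ² + 54zφ + 14(1 − 54z²) ≥ 0. -/
/-!
Write `q = 1 - 54 z² - 9 z φ = 1 - 9 z (φ + 6 z)`, so `q ≥ 1` when `z ≥ 0` and `φ + 6 z ≤ 0`.
The polynomial identity `q P₂ - P₃ = 12 φ² + 4 q²` then gives `q P₂ ≥ P₃ + 4 q² > 0`, hence `P₂ > 0`.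
-/

variable {R : Type*}

section CommRing

variable [CommRing R]

/-- The bracket `P₂` of `I₂` for `f = x^{1/6} h(z)`, `h' = (1 - 54 z²)⁻¹ φ h`, where `p = φ'`. -/
def bracketI₂ (z φ p : R) : R :=
  3 * (1 - 54 * z ^ 2) * p + 3 * φ ^ 2 + 54 * z * φ + 14 * (1 - 54 * z ^ 2)

/-- The bracket `P₃` of `I₃`, in the same notation. -/
def bracketI₃ (z φ p : R) : R :=
  3 * (1 - 54 * z ^ 2) * (1 - 54 * z ^ 2 - 9 * z * φ) * p
    - 27 * z * φ ^ 3 - 9 * (1 + 108 * z ^ 2) * φ ^ 2 + 10 * (1 - 54 * z ^ 2) ^ 2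

theorem mul_bracketI₂_sub_bracketI₃ (z φ p : R) :
    (1 - 54 * z ^ 2 - 9 * z * φ) * bracketI₂ z φ p - bracketI₃ z φ p
      = 12 * φ ^ 2 + 4 * (1 - 54 * z ^ 2 - 9 * z * φ) ^ 2 := by
  unfold bracketI₂ bracketI₃
  ring

end CommRing

section Ordered

variable [CommRing R] [LinearOrder R] [IsStrictOrderedRing R]

theorem one_le_one_sub_mul_sub_mul {z φ : R} (hz : 0 ≤ z) (hφ : φ + 6 * z ≤ 0) :
    1 ≤ 1 - 54 * z ^ 2 - 9 * z * φ := by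
  have h : 1 - 54 * z ^ 2 - 9 * z * φ = 1 - 9 * (z * (φ + 6 * z)) := by ring
  rw [h]
  nlinarith [mul_nonpos_of_nonneg_of_nonpos hz hφ]

theorem bracketI₂_pos_of_bracketI₃_nonneg {z φ p : R} (hz : 0 ≤ z) (hφ : φ + 6 * z ≤ 0)
    (hP₃ : 0 ≤ bracketI₃ z φ p) : 0 < bracketI₂ z φ p := by
  set q := 1 - 54 * z ^ 2 - 9 * z * φ
  have hq : 1 ≤ q := one_le_one_sub_mul_sub_mul hz hφ
  have hqP₂ : 0 < q * bracketI₂ z φ p := by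
    have := mul_bracketI₂_sub_bracketI₃ z φ p
    nlinarith [sq_nonneg φ]
  exact pos_of_mul_pos_right hqP₂ (by linarith)

end Ordered

/-- If `z ≥ 0`, `φ + 6z ≤ 0`, and the `I₃`-bracket `P₃ ≥ 0`, then the `I₂`-bracket
`P₂ ≥ 0`. -/
theorem P3_nonneg_implies_P2_nonneg (z φ p : ℝ) (hz : 0 ≤ z) (hφ : φ + 6 * z ≤ 0)
    (hP3 : 3 * (1 - 54 * z ^ 2) * (1 - 54 * z ^ 2 - 9 * z * φ) * p
        - 27 * z * φ ^ 3 - 9 * (1 + 108 * z ^ 2) * φ ^ 2 + 10 * (1 - 54 * z ^ 2) ^ 2 ≥ 0) :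
    3 * (1 - 54 * z ^ 2) * p + 3 * φ ^ 2 + 54 * z * φ + 14 * (1 - 54 * z ^ 2) ≥ 0 :=
  (bracketI₂_pos_of_bracketI₃_nonneg (p := p) hz hφ hP3).le
end

section
/- There exists a function ψ : ℝ → ℝ, differentiable on the closed interval [0, 1/(3√6)], such that: ψ(0) = −6√6; ψ(1/(3√6)) = −3√6; ψ is monotonically increasing on [0, 1/(3√6)]; ψ(z) ≤ 0 for all z ∈ [0, 1/(3√6)]; and for all z ∈ [0, 1/(3√6)], 3(1 − 54z²)(1 − 9zψ(z))ψ′(z) − 27zψ(z)³ − 9(1 + 54z²)ψ(z)² + 270zψ(z) − 8(1 + 54z²) ≥ 0. -/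
private lemma abel_cert (x y : ℝ) (hx : 0 ≤ x) (hy : 0 ≤ y) :
    0 ≤ 19 * x ^ 0 * y ^ 43 + 46636 * x ^ 1 * y ^ 42 + 998671 * x ^ 2 * y ^ 41 + (44779087/4) * x ^ 3 * y ^ 40 + (676603365/8) * x ^ 4 * y ^ 39 + (2373336809/5) * x ^ 5 * y ^ 38 + (165600778959/80) * x ^ 6 * y ^ 37 + (1148856595073/160) * x ^ 7 * y ^ 36 + (801776826141/40) * x ^ 8 * y ^ 35 + (722597884087/16) * x ^ 9 * y ^ 34 + (16348032737447/200) * x ^ 10 * y ^ 33 + (9464055167393/80) * x ^ 11 * y ^ 32 + (7202782860353/50) * x ^ 12 * y ^ 31 + (162041533611159/800) * x ^ 13 * y ^ 30 + (39736999899317/80) * x ^ 14 * y ^ 29 + (1200796508355459/800) * x ^ 15 * y ^ 28 + (496731906737488/125) * x ^ 16 * y ^ 27 + (437899286461491/50) * x ^ 17 * y ^ 26 + (6542788064954163/400) * x ^ 18 * y ^ 25 + (21161484355887219/800) * x ^ 19 * y ^ 24 + (3764847836803371/100) * x ^ 20 * y ^ 23 + (11925104934562989/250) * x ^ 21 * y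 ^ 22 + (867442798556955/16) * x ^ 22 * y ^ 21 + (44442493414076361/800) * x ^ 23 * y ^ 20 + (2573631335584053/50) * x ^ 24 * y ^ 19 + (34549387728332811/800) * x ^ 25 * y ^ 18 + (65639179791767781/2000) * x ^ 26 * y ^ 17 + (18058806146118137/800) * x ^ 27 * y ^ 16 + (2805967786036259/200) * x ^ 28 * y ^ 15 + (1257701700994123/160) * x ^ 29 * y ^ 14 + (1583067396526051/400) * x ^ 30 * y ^ 13 + (7133840988493377/4000) * x ^ 31 * y ^ 12 + (28631738515873/40) * x ^ 32 * y ^ 11 + (25432244731719/100) * x ^ 33 * y ^ 10 + (7940045317907/100) * x ^ 34 * y ^ 9 + (4316402569197/200) * x ^ 35 * y ^ 8 + (25241062079/5) * x ^ 36 * y ^ 7 + (5005216559/5) * x ^ 37 * y ^ 6 + (824859728/5) * x ^ 38 * y ^ 5 + 21983692 * x ^ 39 * y ^ 4 + 2275746 * x ^ 40 * y ^ 3 + 171706 * x ^ 41 * y ^ 2 + 8400 * x ^ 42 * y ^ 1 + 200 * x ^ 43 * y ^ 0 :=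
  add_nonneg (add_nonneg (add_nonneg (add_nonneg (add_nonneg (add_nonneg (add_nonneg (add_nonneg (add_nonneg (add_nonneg (add_nonneg (add_nonneg (add_nonneg (add_nonneg (add_nonneg (add_nonneg (add_nonneg (add_nonneg (add_nonneg (add_nonneg (add_nonneg (add_nonneg (add_nonneg (add_nonneg (add_nonneg (add_nonneg (add_nonneg (add_nonneg (add_nonneg (add_nonneg (add_nonneg (add_nonneg (add_nonneg (add_nonneg (add_nonneg (add_nonneg (add_nonneg (add_nonneg (add_nonneg (add_nonneg (add_nonneg (add_nonneg (add_nonneg (mul_nonneg (mul_nonneg (by norm_num : (0:ℝ) ≤ 19) (pow_nonneg hx 0)) (pow_nonneg hy 43))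
    (mul_nonneg (mul_nonneg (by norm_num : (0:ℝ) ≤ 46636) (pow_nonneg hx 1)) (pow_nonneg hy 42)))
    (mul_nonneg (mul_nonneg (by norm_num : (0:ℝ) ≤ 998671) (pow_nonneg hx 2)) (pow_nonneg hy 41)))
    (mul_nonneg (mul_nonneg (by norm_num : (0:ℝ) ≤ (44779087/4)) (pow_nonneg hx 3)) (pow_nonneg hy 40)))
    (mul_nonneg (mul_nonneg (by norm_num : (0:ℝ) ≤ (676603365/8)) (pow_nonneg hx 4)) (pow_nonneg hy 39)))
    (mul_nonneg (mul_nonneg (by norm_num : (0:ℝ) ≤ (2373336809/5)) (pow_nonneg hx 5)) (pow_nonneg hy 38)))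
    (mul_nonneg (mul_nonneg (by norm_num : (0:ℝ) ≤ (165600778959/80)) (pow_nonneg hx 6)) (pow_nonneg hy 37)))
    (mul_nonneg (mul_nonneg (by norm_num : (0:ℝ) ≤ (1148856595073/160)) (pow_nonneg hx 7)) (pow_nonneg hy 36)))
    (mul_nonneg (mul_nonneg (by norm_num : (0:ℝ) ≤ (801776826141/40)) (pow_nonneg hx 8)) (pow_nonneg hy 35)))
    (mul_nonneg (mul_nonneg (by norm_num : (0:ℝ) ≤ (722597884087/16)) (pow_nonneg hx 9)) (pow_nonneg hy 34)))
    (mul_nonneg (mul_nonneg (by norm_num : (0:ℝ) ≤ (16348032737447/200)) (pow_nonneg hx 10)) (pow_nonneg hy 33)))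
    (mul_nonneg (mul_nonneg (by norm_num : (0:ℝ) ≤ (9464055167393/80)) (pow_nonneg hx 11)) (pow_nonneg hy 32)))
    (mul_nonneg (mul_nonneg (by norm_num : (0:ℝ) ≤ (7202782860353/50)) (pow_nonneg hx 12)) (pow_nonneg hy 31)))
    (mul_nonneg (mul_nonneg (by norm_num : (0:ℝ) ≤ (162041533611159/800)) (pow_nonneg hx 13)) (pow_nonneg hy 30)))
    (mul_nonneg (mul_nonneg (by norm_num : (0:ℝ) ≤ (39736999899317/80)) (pow_nonneg hx 14)) (pow_nonneg hy 29)))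
    (mul_nonneg (mul_nonneg (by norm_num : (0:ℝ) ≤ (1200796508355459/800)) (pow_nonneg hx 15)) (pow_nonneg hy 28)))
    (mul_nonneg (mul_nonneg (by norm_num : (0:ℝ) ≤ (496731906737488/125)) (pow_nonneg hx 16)) (pow_nonneg hy 27)))
    (mul_nonneg (mul_nonneg (by norm_num : (0:ℝ) ≤ (437899286461491/50)) (pow_nonneg hx 17)) (pow_nonneg hy 26)))
    (mul_nonneg (mul_nonneg (by norm_num : (0:ℝ) ≤ (6542788064954163/400)) (pow_nonneg hx 18)) (pow_nonneg hy 25)))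
    (mul_nonneg (mul_nonneg (by norm_num : (0:ℝ) ≤ (21161484355887219/800)) (pow_nonneg hx 19)) (pow_nonneg hy 24)))
    (mul_nonneg (mul_nonneg (by norm_num : (0:ℝ) ≤ (3764847836803371/100)) (pow_nonneg hx 20)) (pow_nonneg hy 23)))
    (mul_nonneg (mul_nonneg (by norm_num : (0:ℝ) ≤ (11925104934562989/250)) (pow_nonneg hx 21)) (pow_nonneg hy 22)))
    (mul_nonneg (mul_nonneg (by norm_num : (0:ℝ) ≤ (867442798556955/16)) (pow_nonneg hx 22)) (pow_nonneg hy 21)))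
    (mul_nonneg (mul_nonneg (by norm_num : (0:ℝ) ≤ (44442493414076361/800)) (pow_nonneg hx 23)) (pow_nonneg hy 20)))
    (mul_nonneg (mul_nonneg (by norm_num : (0:ℝ) ≤ (2573631335584053/50)) (pow_nonneg hx 24)) (pow_nonneg hy 19)))
    (mul_nonneg (mul_nonneg (by norm_num : (0:ℝ) ≤ (34549387728332811/800)) (pow_nonneg hx 25)) (pow_nonneg hy 18)))
    (mul_nonneg (mul_nonneg (by norm_num : (0:ℝ) ≤ (65639179791767781/2000)) (pow_nonneg hx 26)) (pow_nonneg hy 17)))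
    (mul_nonneg (mul_nonneg (by norm_num : (0:ℝ) ≤ (18058806146118137/800)) (pow_nonneg hx 27)) (pow_nonneg hy 16)))
    (mul_nonneg (mul_nonneg (by norm_num : (0:ℝ) ≤ (2805967786036259/200)) (pow_nonneg hx 28)) (pow_nonneg hy 15)))
    (mul_nonneg (mul_nonneg (by norm_num : (0:ℝ) ≤ (1257701700994123/160)) (pow_nonneg hx 29)) (pow_nonneg hy 14)))
    (mul_nonneg (mul_nonneg (by norm_num : (0:ℝ) ≤ (1583067396526051/400)) (pow_nonneg hx 30)) (pow_nonneg hy 13)))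
    (mul_nonneg (mul_nonneg (by norm_num : (0:ℝ) ≤ (7133840988493377/4000)) (pow_nonneg hx 31)) (pow_nonneg hy 12)))
    (mul_nonneg (mul_nonneg (by norm_num : (0:ℝ) ≤ (28631738515873/40)) (pow_nonneg hx 32)) (pow_nonneg hy 11)))
    (mul_nonneg (mul_nonneg (by norm_num : (0:ℝ) ≤ (25432244731719/100)) (pow_nonneg hx 33)) (pow_nonneg hy 10)))
    (mul_nonneg (mul_nonneg (by norm_num : (0:ℝ) ≤ (7940045317907/100)) (pow_nonneg hx 34)) (pow_nonneg hy 9)))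
    (mul_nonneg (mul_nonneg (by norm_num : (0:ℝ) ≤ (4316402569197/200)) (pow_nonneg hx 35)) (pow_nonneg hy 8)))
    (mul_nonneg (mul_nonneg (by norm_num : (0:ℝ) ≤ (25241062079/5)) (pow_nonneg hx 36)) (pow_nonneg hy 7)))
    (mul_nonneg (mul_nonneg (by norm_num : (0:ℝ) ≤ (5005216559/5)) (pow_nonneg hx 37)) (pow_nonneg hy 6)))
    (mul_nonneg (mul_nonneg (by norm_num : (0:ℝ) ≤ (824859728/5)) (pow_nonneg hx 38)) (pow_nonneg hy 5)))
    (mul_nonneg (mul_nonneg (by norm_num : (0:ℝ) ≤ 21983692) (pow_nonneg hx 39)) (pow_nonneg hy 4)))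
    (mul_nonneg (mul_nonneg (by norm_num : (0:ℝ) ≤ 2275746) (pow_nonneg hx 40)) (pow_nonneg hy 3)))
    (mul_nonneg (mul_nonneg (by norm_num : (0:ℝ) ≤ 171706) (pow_nonneg hx 41)) (pow_nonneg hy 2)))
    (mul_nonneg (mul_nonneg (by norm_num : (0:ℝ) ≤ 8400) (pow_nonneg hx 42)) (pow_nonneg hy 1)))
    (mul_nonneg (mul_nonneg (by norm_num : (0:ℝ) ≤ 200) (pow_nonneg hx 43)) (pow_nonneg hy 0))

/-- Existence of a solution to the constrained Abel differential inequality of the second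
kind on `[0, 1/(3√6)]` used in the proof of Theorem 1.3. -/
theorem abel_inequality_solution_exists :
    ∃ ψ : ℝ → ℝ,
      DifferentiableOn ℝ ψ (Set.Icc 0 (1 / (3 * Real.sqrt 6))) ∧
      ψ 0 = -6 * Real.sqrt 6 ∧
      ψ (1 / (3 * Real.sqrt 6)) = -3 * Real.sqrt 6 ∧
      MonotoneOn ψ (Set.Icc 0 (1 / (3 * Real.sqrt 6))) ∧
      (∀ z ∈ Set.Icc 0 (1 / (3 * Real.sqrt 6)), ψ z ≤ 0) ∧
      (∀ z ∈ Set.Icc 0 (1 / (3 * Real.sqrt 6)),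
        3 * (1 - 54 * z ^ 2) * (1 - 9 * z * ψ z) *
            derivWithin ψ (Set.Icc 0 (1 / (3 * Real.sqrt 6))) z
          - 27 * z * (ψ z) ^ 3 - 9 * (1 + 54 * z ^ 2) * (ψ z) ^ 2
          + 270 * z * ψ z - 8 * (1 + 54 * z ^ 2) ≥ 0) := by
  have hs0 : (0:ℝ) < Real.sqrt 6 := Real.sqrt_pos.mpr (by norm_num)
  have hs2 : Real.sqrt 6 ^ 2 = 6 := Real.sq_sqrt (by norm_num)
  have h3s : (0:ℝ) < 3 * Real.sqrt 6 := by positivity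
  have hb : (0:ℝ) < 1 / (3 * Real.sqrt 6) := by positivity
  refine ⟨fun z => Real.sqrt 6 *
      (-3 - 49/20 * (1 - 3 * Real.sqrt 6 * z) ^ 14 - 11/20 * (1 - 3 * Real.sqrt 6 * z) ^ 4),
    ?_, ?_, ?_, ?_, ?_, ?_⟩
  · exact Differentiable.differentiableOn (by fun_prop)
  · norm_num
    ring
  · have h1 : 1 - 3 * Real.sqrt 6 * (1 / (3 * Real.sqrt 6)) = 0 := by
      field_simp
      norm_num
    simp only [h1]
    norm_num
    ring
  · intro z1 hz1 z2 hz2 h12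
    simp only [Set.mem_Icc] at hz1 hz2
    have k2 : 3 * Real.sqrt 6 * z2 ≤ 1 := by
      have := (le_div_iff₀' h3s).mp hz2.2
      linarith
    have ky : 0 ≤ 1 - 3 * Real.sqrt 6 * z2 := by linarith
    have kle : 1 - 3 * Real.sqrt 6 * z2 ≤ 1 - 3 * Real.sqrt 6 * z1 := by
      have := mul_le_mul_of_nonneg_left h12 h3s.le
      linarith
    have p14 := pow_le_pow_left₀ ky kle 14
    have p4 := pow_le_pow_left₀ ky kle 4
    have hinner : (-3 - 49/20 * (1 - 3 * Real.sqrt 6 * z1) ^ 14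
        - 11/20 * (1 - 3 * Real.sqrt 6 * z1) ^ 4)
        ≤ (-3 - 49/20 * (1 - 3 * Real.sqrt 6 * z2) ^ 14
        - 11/20 * (1 - 3 * Real.sqrt 6 * z2) ^ 4) := by linarith
    exact mul_le_mul_of_nonneg_left hinner hs0.le
  · intro z hz
    simp only [Set.mem_Icc] at hz
    have k2 : 3 * Real.sqrt 6 * z ≤ 1 := by
      have := (le_div_iff₀' h3s).mp hz.2
      linarith
    have ky : 0 ≤ 1 - 3 * Real.sqrt 6 * z := by linarith
    have h14 := pow_nonneg ky 14
    have h4 := pow_nonneg ky 4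
    have hinner : (-3 - 49/20 * (1 - 3 * Real.sqrt 6 * z) ^ 14
        - 11/20 * (1 - 3 * Real.sqrt 6 * z) ^ 4) ≤ 0 := by linarith
    calc Real.sqrt 6 * (-3 - 49/20 * (1 - 3 * Real.sqrt 6 * z) ^ 14
          - 11/20 * (1 - 3 * Real.sqrt 6 * z) ^ 4)
        ≤ Real.sqrt 6 * 0 := mul_le_mul_of_nonneg_left hinner hs0.le
      _ = 0 := mul_zero _
  · intro z hz
    simp only [Set.mem_Icc] at hz
    have k2 : 3 * Real.sqrt 6 * z ≤ 1 := by
      have := (le_div_iff₀' h3s).mp hz.2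
      linarith
    have hx : 0 ≤ 3 * Real.sqrt 6 * z := mul_nonneg h3s.le hz.1
    have hy : 0 ≤ 1 - 3 * Real.sqrt 6 * z := by linarith
    have hv : HasDerivAt (fun z : ℝ => 1 - 3 * Real.sqrt 6 * z) (-(3 * Real.sqrt 6)) z := by
      simpa using ((hasDerivAt_id z).const_mul (3 * Real.sqrt 6)).const_sub 1
    have hd0 : HasDerivAt (fun z : ℝ => Real.sqrt 6 *
        (-3 - 49/20 * (1 - 3 * Real.sqrt 6 * z) ^ 14
          - 11/20 * (1 - 3 * Real.sqrt 6 * z) ^ 4))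
        (Real.sqrt 6 * ((0 - 49/20 * (14 * (1 - 3 * Real.sqrt 6 * z) ^ 13 * -(3 * Real.sqrt 6)))
          - 11/20 * (4 * (1 - 3 * Real.sqrt 6 * z) ^ 3 * -(3 * Real.sqrt 6)))) z := by
      exact (((hasDerivAt_const z (-3:ℝ)).sub ((hv.pow 14).const_mul (49/20))).sub
        ((hv.pow 4).const_mul (11/20))).const_mul (Real.sqrt 6)
    have hd : HasDerivAt (fun z : ℝ => Real.sqrt 6 *
        (-3 - 49/20 * (1 - 3 * Real.sqrt 6 * z) ^ 14
          - 11/20 * (1 - 3 * Real.sqrt 6 * z) ^ 4))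
        (Real.sqrt 6 * ((1029/10) * ((1 - 3 * Real.sqrt 6 * z) ^ 13 * Real.sqrt 6)
          + (33/5) * ((1 - 3 * Real.sqrt 6 * z) ^ 3 * Real.sqrt 6))) z := by
      convert hd0 using 1
      ring
    have hdw : derivWithin (fun z : ℝ => Real.sqrt 6 *
        (-3 - 49/20 * (1 - 3 * Real.sqrt 6 * z) ^ 14
          - 11/20 * (1 - 3 * Real.sqrt 6 * z) ^ 4))
        (Set.Icc 0 (1 / (3 * Real.sqrt 6))) z
        = Real.sqrt 6 * ((1029/10) * ((1 - 3 * Real.sqrt 6 * z) ^ 13 * Real.sqrt 6)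
          + (33/5) * ((1 - 3 * Real.sqrt 6 * z) ^ 3 * Real.sqrt 6)) := by
      exact hd.hasDerivWithinAt.derivWithin
        ((uniqueDiffOn_Icc hb) z (Set.mem_Icc.mpr hz))
    rw [ge_iff_le, hdw]
    have key := abel_cert (3 * Real.sqrt 6 * z) (1 - 3 * Real.sqrt 6 * z) hx hy
    refine le_of_le_of_eq key ?_
    linear_combination (-(9/2) - (46359/2) * z ^ 1 * Real.sqrt 6 ^ 1 - 72 * z ^ 2 + 1413369 * z ^ 2 * Real.sqrt 6 ^ 2 - (366340725/8) * z ^ 3 * Real.sqrt 6 ^ 3 + (16786322145/16) * z ^ 4 * Real.sqrt 6 ^ 4 - (1519019780787/80) * z ^ 5 * Real.sqrt 6 ^ 5 + (45884677081959/160) * z ^ 6 * Real.sqrt 6 ^ 6 - (240010604628219/64) * z ^ 7 * Real.sqrt 6 ^ 7 + (349580272388841/8) * z ^ 8 * Real.sqrt 6 ^ 8 - (9258668351925921/20) * z ^ 9 * Real.sqrt 6 ^ 9 + (3602379694853894193/800) * z ^ 10 * Real.sqrt 6 ^ 10 - (64402971865447044339/1600) * z ^ 11 * Real.sqrt 6 ^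 11 + (32936145931415947347/100) * z ^ 12 * Real.sqrt 6 ^ 12 - (3928420000172475756351/1600) * z ^ 13 * Real.sqrt 6 ^ 13 + (6647169566820807137169/400) * z ^ 14 * Real.sqrt 6 ^ 14 - (81563674160607443122941/800) * z ^ 15 * Real.sqrt 6 ^ 15 + (1133809566704590991843817/2000) * z ^ 16 * Real.sqrt 6 ^ 16 - (22870752436372783718383713/8000) * z ^ 17 * Real.sqrt 6 ^ 17 + (52358375648475343037678031/4000) * z ^ 18 * Real.sqrt 6 ^ 18 - (87165959583693166581624597/1600) * z ^ 19 * Real.sqrt 6 ^ 19 + (41264370433436080420127043/200) * z ^ 20 * Real.sqrt 6 ^ 20 - (5692663877842533305334090519/8000) * z ^ 21 * Real.sqrt 6 ^ 21 + (8944098661796748537966697917/4000) * z ^ 22 * Real.sqrt 6 ^ 22 - (51220723709766213527112021141/8000) * z ^ 23 * Real.sqrt 6 ^ 23 + (267226200923623102883221227/16) * z ^ 24 * Real.sqrt 6 ^ 24 - (31732368995392687230695214219/800) * z ^ 25 * Real.sqrt 6 ^ 25 + (171352836903161880466260709473/2000) * z ^ 26 * Real.sqrt 6 ^ 26 - (672226799848889104801657483731/4000)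 * z ^ 27 * Real.sqrt 6 ^ 27 + (597533558442494583241626375627/2000) * z ^ 28 * Real.sqrt 6 ^ 28 - (192064181861118941860310863983/400) * z ^ 29 * Real.sqrt 6 ^ 29 + (13908091375476794009627412831/20) * z ^ 30 * Real.sqrt 6 ^ 30 - (180805169675475092836214540631/200) * z ^ 31 * Real.sqrt 6 ^ 31 + (26245911066393525316545350916/25) * z ^ 32 * Real.sqrt 6 ^ 32 - (866115061226836922616952795497/800) * z ^ 33 * Real.sqrt 6 ^ 33 + (787377328027656346667316742749/800) * z ^ 34 * Real.sqrt 6 ^ 34 - (1250540462161571844706914826719/1600) * z ^ 35 * Real.sqrt 6 ^ 35 + (535945912354959362017249211451/1000) * z ^ 36 * Real.sqrt 6 ^ 36 - (1250540462161571844706914826719/4000) * z ^ 37 * Real.sqrt 6 ^ 37 + (304185517823085043307087390283/2000) * z ^ 38 * Real.sqrt 6 ^ 38 - (48029292287855533153750640571/800) * z ^ 39 * Real.sqrt 6 ^ 39 + (3694560945219656396442356967/200) * z ^ 40 * Real.sqrt 6 ^ 40 - (33251048506976907567981212703/8000) * z ^ 41 * Real.sqrt 6 ^ 41 + (2433003549290993236681552149/4000)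 * z ^ 42 * Real.sqrt 6 ^ 42 - (347571935612999033811650307/8000) * z ^ 43 * Real.sqrt 6 ^ 43) * hs2
end
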